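/- arXiv:1710.04042 — 10 statements merged into one kernel-verified Lean document; each statement's English description precedes it below -/
import Mathlib

section
/- Let A be a real symmetric n×n matrix with spectral decomposition given by distinct real eigenvalues θ_1,…,θ_m and idempotents E_1,…,E_m, and let P be a real density matrix. Then there exists a time t > 0 such that all entries of U(t)·P·U(−t) are real if and only if the eigenvalue support of P satisfies the ratio condition. -/
open Matrix
open scoped ComplexOrder

/-- The transition matrix `U(t) = exp(itA)`. -/
noncomputable def U {n : ℕ} (A : Matrix (Fin n) (Fin n) ℂ) (t : ℝ) :
    Matrix (Fin n) (Fin n) ℂ :=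
  NormedSpace.exp (((t : ℂ) * Complex.I) • A)

/-!
Since `f ↦ ∑ f r • E r` is a continuous algebra map from `Fin m → ℂ` to matrices, it commutes
with `exp`, so `U(t) = ∑ e^{itθ_r} E_r` and `U(t) P U(-t) = ∑_{r,s} e^{it(θ_r - θ_s)} E_r P E_s`.
Entrywise conjugation is `ℝ`-linear and multiplicative, so it carries the spectral decomposition
of the real matrix `A` to another one; by uniqueness the `E_r` are real. Hence the conjugate of
the evolved state is the same double sum with conjugated coefficients, and comparing the blocks
`E_r (·) E_s` shows that it is real iff `sin(t(θ_r - θ_s)) = 0`, i.e. `t(θ_r - θ_s) ∈ πℤ`, for all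
`(r, s)` in the support. A `t > 0` with this property exists iff the differences are pairwise
commensurable: take `t = Nπ/|δ|` for a fixed nonzero difference `δ` and a common denominator `N`
of the ratios to `δ`.
-/

namespace CompleteOrthogonalIdempotents

variable {κ R 𝔸 : Type*} [Fintype κ] {e : κ → 𝔸}

section Algebra

variable [CommSemiring R] [Semiring 𝔸] [Algebra R 𝔸]

theorem sum_smul_mul_sum_smul (he : CompleteOrthogonalIdempotents e) (f g : κ → R) :
    (∑ i, f i • e i) * (∑ i, g i • e i) = ∑ i, (f i * g i) • e i := by
  classical
  simp only [Finset.sum_mul, Finset.mul_sum, smul_mul_smul_comm,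
    he.toOrthogonalIdempotents.mul_eq]
  simp

noncomputable def sumSmulAlgHom (he : CompleteOrthogonalIdempotents e) : (κ → R) →ₐ[R] 𝔸 :=
  AlgHom.ofLinearMap (Fintype.linearCombination R e)
    (by simp [Fintype.linearCombination_apply, he.complete])
    (fun f g => by simp [Fintype.linearCombination_apply, he.sum_smul_mul_sum_smul])

theorem sumSmulAlgHom_apply (he : CompleteOrthogonalIdempotents e) (f : κ → R) :
    he.sumSmulAlgHom f = ∑ i, f i • e i :=
  Fintype.linearCombination_apply R e f

end Algebra

theorem exp_sum_smul [NormedRing 𝔸] [NormedAlgebra ℂ 𝔸] [Algebra ℚ 𝔸]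
    (he : CompleteOrthogonalIdempotents e) (c : κ → ℂ) :
    NormedSpace.exp (∑ i, c i • e i) = ∑ i, Complex.exp (c i) • e i := by
  have hcont : Continuous (he.sumSmulAlgHom (R := ℂ)) := by
    simp only [funext (sumSmulAlgHom_apply he)]
    fun_prop
  rw [← sumSmulAlgHom_apply he, ← NormedSpace.map_exp _ hcont, Pi.exp_def, sumSmulAlgHom_apply,
    Complex.exp_eq_exp_ℂ]

end CompleteOrthogonalIdempotents

theorem Matrix.exp_sum_smul {ι κ : Type*} [Fintype ι] [DecidableEq ι] [Fintype κ]
    {e : κ → Matrix ι ι ℂ} (he : CompleteOrthogonalIdempotents e) (c : κ → ℂ) :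
    NormedSpace.exp (∑ i, c i • e i) = ∑ i, Complex.exp (c i) • e i :=
  open scoped Matrix.Norms.Operator in he.exp_sum_smul c

section Blocks

variable {κ K 𝔸 : Type*} [Fintype κ] {e : κ → 𝔸}

theorem OrthogonalIdempotents.mul_sum_sum_smul_mul [CommSemiring K] [Semiring 𝔸] [Algebra K 𝔸]
    (he : OrthogonalIdempotents e) (p : 𝔸) (c : κ → κ → K) (k l : κ) :
    e k * (∑ r, ∑ s, c r s • (e r * p * e s)) * e l = c k l • (e k * p * e l) := by
  classical
  have hblock : ∀ r s, e k * (e r * p * e s) * e l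
      = if k = r ∧ s = l then e k * p * e l else 0 := by
    intro r s
    rw [show e k * (e r * p * e s) * e l = (e k * e r) * p * (e s * e l) by noncomm_ring,
      he.mul_eq, he.mul_eq]
    split_ifs <;> simp_all
  simp only [Finset.mul_sum, Finset.sum_mul, mul_smul_comm, smul_mul_assoc, hblock]
  simp [ite_and]

theorem OrthogonalIdempotents.sum_sum_smul_eq_iff [Field K] [Ring 𝔸] [Algebra K 𝔸]
    (he : OrthogonalIdempotents e) (p : 𝔸) (c d : κ → κ → K) :
    ∑ r, ∑ s, c r s • (e r * p * e s) = ∑ r, ∑ s, d r s • (e r * p * e s) ↔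
      ∀ r s, e r * p * e s ≠ 0 → c r s = d r s := by
  constructor
  · intro h r s hrs
    have hblock := congrArg (e r * · * e s) h
    simp only [he.mul_sum_sum_smul_mul] at hblock
    exact (smul_left_injective K hrs) hblock
  · intro h
    refine Finset.sum_congr rfl fun r _ => Finset.sum_congr rfl fun s _ => ?_
    by_cases hrs : e r * p * e s = 0
    · simp [hrs]
    · rw [h r s hrs]

theorem CompleteOrthogonalIdempotents.eq_of_sum_smul_eq [Field K] [Ring 𝔸] [Algebra K 𝔸]
    {f : κ → 𝔸} (he : CompleteOrthogonalIdempotents e) (hf : CompleteOrthogonalIdempotents f)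
    {θ : κ → K} (hθ : Function.Injective θ) (h : ∑ i, θ i • e i = ∑ i, θ i • f i) : e = f := by
  classical
  have mul_eigen : ∀ k, e k * ∑ i, θ i • f i = θ k • e k := by
    intro k
    simp [← h, Finset.mul_sum, he.toOrthogonalIdempotents.mul_eq]
  have eigen_mul : ∀ l, (∑ i, θ i • f i) * f l = θ l • f l := by
    intro l
    simp [Finset.sum_mul, hf.toOrthogonalIdempotents.mul_eq]
  have ortho : ∀ k l, k ≠ l → e k * f l = 0 := by
    intro k l hkl
    have : (θ k - θ l) • (e k * f l) = 0 := by
      rw [sub_smul, ← smul_mul_assoc, ← mul_eigen, ← mul_smul_comm, ← eigen_mul, mul_assoc,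
        sub_self]
    exact (smul_eq_zero.1 this).resolve_left (sub_ne_zero.2 (hθ.ne hkl))
  funext k
  calc e k = e k * ∑ i, f i := by rw [hf.complete, mul_one]
    _ = e k * f k := by
      rw [Finset.mul_sum, Finset.sum_eq_single k (fun i _ hik => ortho k i (Ne.symm hik))
        (by simp)]
    _ = (∑ i, e i) * f k := by
      rw [Finset.sum_mul, Finset.sum_eq_single k (fun i _ hik => ortho i k hik) (by simp)]
    _ = f k := by rw [he.complete, one_mul]

end Blocks

namespace Matrix

theorem map_conj_eq_self_iff {ι : Type*} {M : Matrix ι ι ℂ} :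
    M.map (starRingEnd ℂ) = M ↔ ∀ i j, (M i j).im = 0 := by
  simp only [← Matrix.ext_iff, map_apply, Complex.conj_eq_iff_im]

variable {ι κ : Type*} [Fintype ι] [Fintype κ]

theorem map_conj_sum_sum_smul (p : Matrix ι ι ℂ) (e : κ → Matrix ι ι ℂ) (c : κ → κ → ℂ) :
    (∑ r, ∑ s, c r s • (e r * p * e s)).map (starRingEnd ℂ) =
      ∑ r, ∑ s, starRingEnd ℂ (c r s) •
        ((e r).map (starRingEnd ℂ) * p.map (starRingEnd ℂ) * (e s).map (starRingEnd ℂ)) := by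
  ext i j
  simp [Matrix.sum_apply, Matrix.mul_apply, map_sum]

theorem im_sum_sum_smul_eq_zero_iff [DecidableEq ι] {e : κ → Matrix ι ι ℂ}
    (he : OrthogonalIdempotents e) (he_real : ∀ r, (e r).map (starRingEnd ℂ) = e r)
    {p : Matrix ι ι ℂ} (hp_real : p.map (starRingEnd ℂ) = p) (c : κ → κ → ℂ) :
    (∀ i j, ((∑ r, ∑ s, c r s • (e r * p * e s)) i j).im = 0) ↔
      ∀ r s, e r * p * e s ≠ 0 → (c r s).im = 0 := by
  rw [← map_conj_eq_self_iff, map_conj_sum_sum_smul]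
  simp only [he_real, hp_real, he.sum_sum_smul_eq_iff, Complex.conj_eq_iff_im]

theorem _root_.CompleteOrthogonalIdempotents.map_conj_eq_self [DecidableEq ι] {e : κ → Matrix ι ι ℂ}
    (he : CompleteOrthogonalIdempotents e) {θ : κ → ℝ} (hθ : Function.Injective θ)
    {A : Matrix ι ι ℂ} (hA_real : A.map (starRingEnd ℂ) = A)
    (hA : A = ∑ r, (θ r : ℂ) • e r) (r : κ) :
    (e r).map (starRingEnd ℂ) = e r := by
  let σ : Matrix ι ι ℂ ≃ₐ[ℝ] Matrix ι ι ℂ := Complex.conjAe.mapMatrix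
  have hσ : ∀ M, σ M = M.map (starRingEnd ℂ) := fun M => by
    rw [AlgEquiv.mapMatrix_apply, Complex.conjAe_coe]
  have hσe : CompleteOrthogonalIdempotents (σ ∘ e) := he.map (σ : Matrix ι ι ℂ →+* Matrix ι ι ℂ)
  have hA' : A = ∑ r, θ r • e r := by simpa only [Complex.coe_smul] using hA
  have hsum : ∑ r, θ r • (σ ∘ e) r = ∑ r, θ r • e r := by
    rw [← hA', ← hA_real, ← hσ, hA', map_sum]
    simp only [map_smul, Function.comp_apply]
  rw [← hσ]
  exact congrFun (hσe.eq_of_sum_smul_eq he hθ hsum) r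

end Matrix

theorem Rat.exists_pos_nat_forall_mul_eq_int {ι : Type*} [Finite ι] (q : ι → ℚ) :
    ∃ N : ℕ, 0 < N ∧ ∀ i, ∃ z : ℤ, (N : ℚ) * q i = z := by
  have := Fintype.ofFinite ι
  refine ⟨∏ i, (q i).den, Finset.prod_pos fun i _ => (q i).pos, fun i => ?_⟩
  obtain ⟨M, hM⟩ := Finset.dvd_prod_of_mem (fun i => (q i).den) (Finset.mem_univ i)
  refine ⟨M * (q i).num, ?_⟩
  rw [hM]
  push_cast
  rw [mul_comm ((q i).den : ℚ), mul_assoc, mul_comm _ (q i), Rat.mul_den_eq_num]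

theorem exists_pos_forall_int_mul_eq_mul_iff {ι : Type*} (x : ι → ℝ) {s : Set ι}
    (hs : s.Finite) {c : ℝ} (hc : 0 < c) :
    (∃ t, 0 < t ∧ ∀ i ∈ s, ∃ z : ℤ, z * c = t * x i) ↔
      ∀ i j, i ∈ s → j ∈ s → x j ≠ 0 → ∃ q : ℚ, x i / x j = q := by
  constructor
  · rintro ⟨t, ht, hz⟩ i j hi hj hxj
    obtain ⟨a, ha⟩ := hz i hi
    obtain ⟨b, hb⟩ := hz j hj
    have hb0 : (b : ℝ) ≠ 0 := by
      rintro h0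
      rw [h0, zero_mul] at hb
      exact mul_ne_zero ht.ne' hxj hb.symm
    refine ⟨a / b, ?_⟩
    rw [← mul_div_mul_left _ _ ht.ne', ← ha, ← hb, mul_div_mul_right _ _ hc.ne']
    push_cast
    rfl
  · intro h
    by_cases hzero : ∀ j ∈ s, x j = 0
    · exact ⟨1, one_pos, fun i hi => ⟨0, by simp [hzero i hi]⟩⟩
    push Not at hzero
    obtain ⟨j, hj, hxj⟩ := hzero
    have hratio : ∀ i : s, ∃ q : ℚ, x i / |x j| = q := by
      intro i
      rcases abs_choice (x j) with habs | habs
      · rw [habs]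
        exact h i j i.2 hj hxj
      · obtain ⟨q, hq⟩ := h i j i.2 hj hxj
        exact ⟨-q, by rw [habs, div_neg, hq, Rat.cast_neg]⟩
    choose q hq using hratio
    have := hs.to_subtype
    obtain ⟨N, hN, hNz⟩ := Rat.exists_pos_nat_forall_mul_eq_int q
    choose z hz using hNz
    refine ⟨N * c / |x j|, by positivity, fun i hi => ⟨z ⟨i, hi⟩, ?_⟩⟩
    have hz' : (z ⟨i, hi⟩ : ℝ) = N * (x i / |x j|) := by
      rw [hq ⟨i, hi⟩]
      exact_mod_cast (hz ⟨i, hi⟩).symm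
    rw [hz']
    field_simp

theorem U_eq_sum {n : ℕ} {κ : Type*} [Fintype κ] {E : κ → Matrix (Fin n) (Fin n) ℂ}
    (hE : CompleteOrthogonalIdempotents E) {θ : κ → ℝ} {A : Matrix (Fin n) (Fin n) ℂ}
    (hA : A = ∑ r, (θ r : ℂ) • E r) (t : ℝ) :
    U A t = ∑ r, Complex.exp (((t * θ r : ℝ) : ℂ) * Complex.I) • E r := by
  rw [U, hA, Finset.smul_sum]
  simp only [smul_smul]
  rw [Matrix.exp_sum_smul hE]
  congr! 3
  push_cast
  ring

theorem U_mul_mul_U_neg {n : ℕ} {κ : Type*} [Fintype κ] {E : κ → Matrix (Fin n) (Fin n) ℂ}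
    (hE : CompleteOrthogonalIdempotents E) {θ : κ → ℝ} {A : Matrix (Fin n) (Fin n) ℂ}
    (hA : A = ∑ r, (θ r : ℂ) • E r) (P : Matrix (Fin n) (Fin n) ℂ) (t : ℝ) :
    U A t * P * U A (-t) =
      ∑ r, ∑ s, Complex.exp (((t * (θ r - θ s) : ℝ) : ℂ) * Complex.I) • (E r * P * E s) := by
  rw [U_eq_sum hE hA, U_eq_sum hE hA, Finset.sum_mul, Finset.sum_mul]
  simp only [Finset.mul_sum, smul_mul_assoc, mul_smul_comm, smul_smul, ← Complex.exp_add]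
  refine Finset.sum_congr rfl fun r _ => Finset.sum_congr rfl fun s _ => ?_
  congr 2
  push_cast
  ring

theorem stmt_1_general {n m : ℕ}
    (A : Matrix (Fin n) (Fin n) ℂ)
    (hAreal : ∀ i j, (A i j).im = 0)
    (θ : Fin m → ℝ) (hθ : Function.Injective θ)
    (E : Fin m → Matrix (Fin n) (Fin n) ℂ)
    (hEmul : ∀ r s : Fin m, E r * E s = if r = s then E r else 0)
    (hEsum : ∑ r, E r = 1)
    (hspec : A = ∑ r, (θ r : ℂ) • E r)
    (P : Matrix (Fin n) (Fin n) ℂ)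
    (hPreal : ∀ i j, (P i j).im = 0) :
    (∃ t : ℝ, 0 < t ∧ ∀ i j, ((U A t * P * U A (-t)) i j).im = 0) ↔
      (∀ r s k l : Fin m, E r * P * E s ≠ 0 → E k * P * E l ≠ 0 → θ k ≠ θ l →
        ∃ q : ℚ, (θ r - θ s) / (θ k - θ l) = (q : ℝ)) := by
  have hE : CompleteOrthogonalIdempotents E := ⟨OrthogonalIdempotents.iff_mul_eq.2 hEmul, hEsum⟩
  have hE_real := hE.map_conj_eq_self hθ (Matrix.map_conj_eq_self_iff.2 hAreal) hspec
  have h_real_iff (t : ℝ) : (∀ i j, ((U A t * P * U A (-t)) i j).im = 0) ↔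
      ∀ p ∈ {p : Fin m × Fin m | E p.1 * P * E p.2 ≠ 0},
        ∃ z : ℤ, z * Real.pi = t * (θ p.1 - θ p.2) := by
    rw [U_mul_mul_U_neg hE hspec, Matrix.im_sum_sum_smul_eq_zero_iff hE.toOrthogonalIdempotents
      hE_real (Matrix.map_conj_eq_self_iff.2 hPreal)]
    simp only [Complex.exp_ofReal_mul_I_im, Real.sin_eq_zero_iff, Prod.forall, Set.mem_ofPred_eq]
  simp only [h_real_iff]
  rw [exists_pos_forall_int_mul_eq_mul_iff _ (Set.toFinite _) Real.pi_pos]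
  simp only [Prod.forall, Set.mem_ofPred_eq, sub_ne_zero]

/-- For a real symmetric `A` with spectral decomposition
`A = ∑ θ_r • E_r` and a real density matrix `P`, there is a time `t > 0` such that
`U(t)·P·U(−t)` is real if and only if the eigenvalue support of `P` satisfies the
ratio condition. -/
theorem stmt_1 {n m : ℕ} (hn : 1 ≤ n)
    (A : Matrix (Fin n) (Fin n) ℂ)
    (hAreal : ∀ i j, (A i j).im = 0) (hAsym : Aᵀ = A)
    (θ : Fin m → ℝ) (hθ : Function.Injective θ)
    (E : Fin m → Matrix (Fin n) (Fin n) ℂ)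
    (hE0 : ∀ r, E r ≠ 0)
    (hEherm : ∀ r, (E r).IsHermitian)
    (hEmul : ∀ r s : Fin m, E r * E s = if r = s then E r else 0)
    (hEsum : ∑ r, E r = 1)
    (hspec : A = ∑ r, (θ r : ℂ) • E r)
    (P : Matrix (Fin n) (Fin n) ℂ)
    (hP : P.PosSemidef) (hPtr : P.trace = 1)
    (hPreal : ∀ i j, (P i j).im = 0) :
    (∃ t : ℝ, 0 < t ∧ ∀ i j, ((U A t * P * U A (-t)) i j).im = 0) ↔
      (∀ r s k l : Fin m, E r * P * E s ≠ 0 → E k * P * E l ≠ 0 → θ k ≠ θ l →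
        ∃ q : ℚ, (θ r - θ s) / (θ k - θ l) = (q : ℝ)) :=
  stmt_1_general A hAreal θ hθ E hEmul hEsum hspec P hPreal
end

section
/- Let A be a real symmetric n×n matrix and let P be a real density matrix. If for some time t the matrix Q = U(t)·P·U(−t) has all entries real, then U(2t)·P·U(−2t) = P, and U(2t) commutes with both P and Q. -/
/-!
Since `A` is real symmetric, `U(t)` is symmetric and `U(t)ᴴ = U(-t)`. Transposing
`Q = U(t) P U(-t)` therefore gives `Qᵀ = U(-t) P U(t)`, while `Q`, being real and Hermitian,
is symmetric. Hence `U(-t) P U(t) = U(t) P U(-t)`, and multiplying by `U(t)` on both sides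
shows that `U(2t) = U(t)²` commutes with `P`, hence also with `Q`.
-/

open Matrix
open scoped ComplexOrder

theorem Matrix.conjTranspose_eq_transpose_of_im_eq_zero {m n : Type*} {M : Matrix m n ℂ}
    (h : ∀ i j, (M i j).im = 0) : Mᴴ = Mᵀ := by
  ext i j
  exact Complex.conj_eq_iff_im.2 (h j i)

theorem commute_mul_self_of_conj_eq_inv_conj {M : Type*} [Monoid M] {u v p : M}
    (huv : u * v = 1) (hvu : v * u = 1) (h : v * p * u = u * p * v) : Commute (u * u) p :=
  calc u * u * p = u * u * p * (v * u) := by rw [hvu, mul_one]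
    _ = u * (u * p * v) * u := by simp only [mul_assoc]
    _ = u * (v * p * u) * u := by rw [h]
    _ = (u * v) * p * (u * u) := by simp only [mul_assoc]
    _ = p * (u * u) := by rw [huv, one_mul]

section TransitionMatrix

variable {n : ℕ} (A : Matrix (Fin n) (Fin n) ℂ)

theorem U_add (s t : ℝ) : U A (s + t) = U A s * U A t := by
  unfold U
  rw [← Matrix.exp_add_of_commute _ _ (((Commute.refl A).smul_left _).smul_right _),
    ← add_smul]
  push_cast
  ring_nf

theorem U_zero : U A 0 = 1 := by
  simp [U]

theorem U_mul_U_neg (t : ℝ) : U A t * U A (-t) = 1 := by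
  rw [← U_add, add_neg_cancel, U_zero]

theorem U_neg_mul_U (t : ℝ) : U A (-t) * U A t = 1 := by
  rw [← U_add, neg_add_cancel, U_zero]

theorem commute_U (s t : ℝ) : Commute (U A s) (U A t) := by
  rw [Commute, SemiconjBy, ← U_add, ← U_add, add_comm]

variable {A}

theorem U_transpose (hA : Aᵀ = A) (t : ℝ) : (U A t)ᵀ = U A t := by
  rw [U, ← Matrix.exp_transpose, transpose_smul, hA]

theorem U_conjTranspose (hA : A.IsHermitian) (t : ℝ) : (U A t)ᴴ = U A (-t) := by
  rw [U, ← Matrix.exp_conjTranspose, conjTranspose_smul, hA.eq, U]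
  congr 2
  simp

end TransitionMatrix

theorem stmt_2_general {n : ℕ}
    (A : Matrix (Fin n) (Fin n) ℂ)
    (hAreal : ∀ i j, (A i j).im = 0) (hAsym : Aᵀ = A)
    (P : Matrix (Fin n) (Fin n) ℂ)
    (hP : P.PosSemidef)
    (hPreal : ∀ i j, (P i j).im = 0)
    (t : ℝ) (Q : Matrix (Fin n) (Fin n) ℂ)
    (hQ : Q = U A t * P * U A (-t))
    (hQreal : ∀ i j, (Q i j).im = 0) :
    U A (2 * t) * P * U A (-(2 * t)) = P ∧
      U A (2 * t) * P = P * U A (2 * t) ∧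
      U A (2 * t) * Q = Q * U A (2 * t) := by
  have hAherm : A.IsHermitian := (conjTranspose_eq_transpose_of_im_eq_zero hAreal).trans hAsym
  have hPsym : Pᵀ = P := (conjTranspose_eq_transpose_of_im_eq_zero hPreal).symm.trans hP.1
  have hQherm : Qᴴ = Q := by
    rw [hQ, conjTranspose_mul, conjTranspose_mul, hP.1, U_conjTranspose hAherm,
      U_conjTranspose hAherm, neg_neg, mul_assoc]
  have hQsym : Qᵀ = Q := (conjTranspose_eq_transpose_of_im_eq_zero hQreal).symm.trans hQherm
  have hreflect : U A (-t) * P * U A t = U A t * P * U A (-t) := by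
    rw [← hQ, ← hQsym, hQ, transpose_mul, transpose_mul, hPsym, U_transpose hAsym,
      U_transpose hAsym, mul_assoc]
  have hcommP : Commute (U A (2 * t)) P := by
    rw [two_mul, U_add]
    exact commute_mul_self_of_conj_eq_inv_conj (U_mul_U_neg A t) (U_neg_mul_U A t) hreflect
  refine ⟨?_, hcommP.eq, ?_⟩
  · rw [hcommP.eq, mul_assoc, U_mul_U_neg, mul_one]
  · rw [hQ]
    exact (((commute_U A _ t).mul_right hcommP).mul_right (commute_U A _ _)).eq

/-- If `A` is real symmetric, `P` is a real density matrix, and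
`Q = U(t)·P·U(−t)` is real, then `U(2t)·P·U(−2t) = P` and `U(2t)` commutes with
`P` and `Q`. -/
theorem stmt_2 {n : ℕ} (hn : 1 ≤ n)
    (A : Matrix (Fin n) (Fin n) ℂ)
    (hAreal : ∀ i j, (A i j).im = 0) (hAsym : Aᵀ = A)
    (P : Matrix (Fin n) (Fin n) ℂ)
    (hP : P.PosSemidef) (hPtr : P.trace = 1)
    (hPreal : ∀ i j, (P i j).im = 0)
    (t : ℝ) (Q : Matrix (Fin n) (Fin n) ℂ)
    (hQ : Q = U A t * P * U A (-t))
    (hQreal : ∀ i j, (Q i j).im = 0) :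
    U A (2 * t) * P * U A (-(2 * t)) = P ∧
      U A (2 * t) * P = P * U A (2 * t) ∧
      U A (2 * t) * Q = Q * U A (2 * t) :=
  stmt_2_general A hAreal hAsym P hP hPreal t Q hQ hQreal
end

section
/- Let A be a real symmetric n×n matrix with spectral decomposition given by distinct real eigenvalues θ_1,…,θ_m and idempotents E_1,…,E_m. Suppose P and Q are real density matrices and there is perfect state transfer from P to Q at time t, i.e. U(t)·P·U(−t) = Q. Then: (a) E_r·Q·E_r = E_r·P·E_r for every r; (b) if t·(θ_r − θ_s) is not an integer multiple of π, then E_r·P·E_s = 0 and E_r·Q·E_s = 0; (c) for every pair (r,s) there is a sign ε ∈ {1,−1} such that E_r·Q·E_s = ε·E_r·P·E_s. -/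
open Matrix
open scoped ComplexOrder

/-!
Because `E_r A = θ_r E_r = A E_r`, conjugation by `U(t) = exp(itA)` multiplies the block
`E_r P E_s` by the phase `exp(it(θ_r - θ_s))`. The idempotents of a real matrix are real: entrywise
conjugation turns the spectral decomposition into one with the same (real) eigenvalues, and a
spectral decomposition is determined by its eigenvalues. Hence the blocks of `P` and `Q` are real,
and a real block equal to a phase times another real block vanishes unless the phase is real,
i.e. `±1`.
-/

open NormedSpace

section ExpEigen

variable {𝕂 𝔸 : Type*} [RCLike 𝕂] [NormedRing 𝔸] [NormedAlgebra 𝕂 𝔸] [CompleteSpace 𝔸]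

theorem mul_exp_of_mul_eq_smul {e a : 𝔸} {θ : 𝕂} (h : e * a = θ • e) :
    e * exp a = exp θ • e := by
  have hpow (k : ℕ) : e * a ^ k = θ ^ k • e := by
    induction k with
    | zero => simp
    | succ k ih => rw [pow_succ, ← mul_assoc, ih, smul_mul_assoc, h, smul_smul, pow_succ]
  have hterms : (fun k : ℕ => e * ((k.factorial : 𝕂)⁻¹ • a ^ k)) =
      fun k => ((k.factorial : 𝕂)⁻¹ • θ ^ k) • e := by
    ext1 k
    rw [mul_smul_comm, hpow, smul_eq_mul, mul_smul]
  exact ((exp_series_hasSum_exp' a).mul_left e).unique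
    (hterms ▸ (exp_series_hasSum_exp' θ).smul_const e)

theorem exp_mul_of_mul_eq_smul {e a : 𝔸} {θ : 𝕂} (h : a * e = θ • e) :
    exp a * e = exp θ • e := by
  have hpow (k : ℕ) : a ^ k * e = θ ^ k • e := by
    induction k with
    | zero => simp
    | succ k ih => rw [pow_succ', mul_assoc, ih, mul_smul_comm, h, smul_smul, pow_succ]
  have hterms : (fun k : ℕ => ((k.factorial : 𝕂)⁻¹ • a ^ k) * e) =
      fun k => ((k.factorial : 𝕂)⁻¹ • θ ^ k) • e := by
    ext1 k
    rw [smul_mul_assoc, hpow, smul_eq_mul, mul_smul]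
  exact ((exp_series_hasSum_exp' a).mul_right e).unique
    (hterms ▸ (exp_series_hasSum_exp' θ).smul_const e)

end ExpEigen

theorem mul_eq_zero_of_eigenvalue_ne {𝕂 𝔸 : Type*} [Field 𝕂] [Ring 𝔸] [Algebra 𝕂 𝔸]
    {a x y : 𝔸} {c d : 𝕂} (hy : y * a = c • y) (hx : a * x = d • x) (hcd : c ≠ d) :
    y * x = 0 := by
  have : (c - d) • (y * x) = 0 := by
    rw [sub_smul, ← smul_mul_assoc, ← hy, ← mul_smul_comm, ← hx, mul_assoc, sub_self]
  exact (smul_eq_zero.mp this).resolve_left (sub_ne_zero.mpr hcd)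

structure IsSpectralDecomposition {ι 𝕂 𝔸 : Type*} [Fintype ι] [DecidableEq ι] [CommSemiring 𝕂]
    [Semiring 𝔸] [Algebra 𝕂 𝔸] (a : 𝔸) (θ : ι → 𝕂) (e : ι → 𝔸) : Prop where
  injective : Function.Injective θ
  mul_eq_ite : ∀ r s, e r * e s = if r = s then e r else 0
  sum_eq_one : ∑ r, e r = 1
  eq_sum_smul : a = ∑ r, θ r • e r

namespace IsSpectralDecomposition

variable {ι 𝕂 𝔸 𝔹 : Type*} [Fintype ι] [DecidableEq ι]

section CommSemiring

variable [CommSemiring 𝕂] [Semiring 𝔸] [Algebra 𝕂 𝔸] [Semiring 𝔹] [Algebra 𝕂 𝔹]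
  {a : 𝔸} {θ : ι → 𝕂} {e : ι → 𝔸}

theorem mul_left (h : IsSpectralDecomposition a θ e) (r : ι) : e r * a = θ r • e r := by
  simp [h.eq_sum_smul, Finset.mul_sum, h.mul_eq_ite]

theorem mul_right (h : IsSpectralDecomposition a θ e) (r : ι) : a * e r = θ r • e r := by
  simp [h.eq_sum_smul, Finset.sum_mul, h.mul_eq_ite]

theorem map (h : IsSpectralDecomposition a θ e) (φ : 𝔸 →ₐ[𝕂] 𝔹) :
    IsSpectralDecomposition (φ a) θ (φ ∘ e) where
  injective := h.injective
  mul_eq_ite r s := by simp [← map_mul, h.mul_eq_ite, apply_ite φ]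
  sum_eq_one := by simp [← map_sum, h.sum_eq_one]
  eq_sum_smul := by simp [h.eq_sum_smul]

end CommSemiring

section Field

variable [Field 𝕂] [Ring 𝔸] [Algebra 𝕂 𝔸] {a : 𝔸} {θ : ι → 𝕂} {e : ι → 𝔸}

theorem mul_eq_self_of_right_eigen (h : IsSpectralDecomposition a θ e) {x : 𝔸} {r : ι}
    (hx : a * x = θ r • x) : e r * x = x := by
  have hzero (s : ι) (hs : s ≠ r) : e s * x = 0 :=
    mul_eq_zero_of_eigenvalue_ne (h.mul_left s) hx (h.injective.ne hs)
  calc e r * x = ∑ s, e s * x := (Fintype.sum_eq_single r hzero).symm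
    _ = x := by rw [← Finset.sum_mul, h.sum_eq_one, one_mul]

theorem mul_eq_self_of_left_eigen (h : IsSpectralDecomposition a θ e) {x : 𝔸} {r : ι}
    (hx : x * a = θ r • x) : x * e r = x := by
  have hzero (s : ι) (hs : s ≠ r) : x * e s = 0 :=
    mul_eq_zero_of_eigenvalue_ne hx (h.mul_right s) (h.injective.ne hs).symm
  calc x * e r = ∑ s, x * e s := (Fintype.sum_eq_single r hzero).symm
    _ = x := by rw [← Finset.mul_sum, h.sum_eq_one, mul_one]

theorem eq_of_eigenvalues_eq {f : ι → 𝔸} (he : IsSpectralDecomposition a θ e)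
    (hf : IsSpectralDecomposition a θ f) : e = f := by
  ext1 r
  calc e r = e r * f r := (hf.mul_eq_self_of_left_eigen (he.mul_left r)).symm
    _ = f r := he.mul_eq_self_of_right_eigen (hf.mul_right r)

theorem apply_eq_self (h : IsSpectralDecomposition a θ e) (φ : 𝔸 →ₐ[𝕂] 𝔸) (ha : φ a = a)
    (r : ι) : φ (e r) = e r := by
  have hφ := h.map φ
  rw [ha] at hφ
  exact congrFun (hφ.eq_of_eigenvalues_eq h) r

end Field

end IsSpectralDecomposition

section ConjEntrywise

variable {n : Type*} [Fintype n] [DecidableEq n]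

noncomputable def Matrix.conjEntrywise : Matrix n n ℂ ≃ₐ[ℝ] Matrix n n ℂ :=
  Complex.conjAe.mapMatrix

theorem Matrix.conjEntrywise_apply (M : Matrix n n ℂ) :
    conjEntrywise M = M.map (starRingEnd ℂ) :=
  rfl

theorem Matrix.conjEntrywise_eq_self_of_im_eq_zero {M : Matrix n n ℂ}
    (h : ∀ i j, (M i j).im = 0) : conjEntrywise M = M := by
  ext i j
  simp [conjEntrywise_apply, Complex.conj_eq_iff_im, h i j]

theorem Matrix.conjEntrywise_smul (z : ℂ) (M : Matrix n n ℂ) :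
    conjEntrywise (z • M) = starRingEnd ℂ z • conjEntrywise M := by
  ext i j
  simp [conjEntrywise_apply]

theorem Matrix.im_eq_zero_or_eq_zero_of_eq_smul {X Y : Matrix n n ℂ} {z : ℂ}
    (hX : conjEntrywise X = X) (hY : conjEntrywise Y = Y) (h : Y = z • X) :
    z.im = 0 ∨ X = 0 := by
  have hconj : Y = starRingEnd ℂ z • X := by rw [← hY, h, conjEntrywise_smul, hX]
  have : (z - starRingEnd ℂ z) • X = 0 := by rw [sub_smul, ← h, ← hconj, sub_self]
  refine (smul_eq_zero.mp this).imp_left fun hz => ?_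
  exact Complex.conj_eq_iff_im.mp (sub_eq_zero.mp hz).symm

end ConjEntrywise

theorem IsSpectralDecomposition.mul_U_mul_U_neg_mul {n : ℕ} {ι : Type*} [Fintype ι]
    [DecidableEq ι] {A : Matrix (Fin n) (Fin n) ℂ} {θ : ι → ℝ} {E : ι → Matrix (Fin n) (Fin n) ℂ}
    (h : IsSpectralDecomposition A θ E) (t : ℝ) (P : Matrix (Fin n) (Fin n) ℂ) (r s : ι) :
    E r * (U A t * P * U A (-t)) * E s =
      Complex.exp (↑(t * (θ r - θ s)) * Complex.I) • (E r * P * E s) := by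
  have hleft (c : ℂ) : E r * (c • A) = (c * θ r) • E r := by
    rw [mul_smul_comm, h.mul_left, ← Complex.coe_smul, smul_smul]
  have hright (c : ℂ) : (c • A) * E s = (c * θ s) • E s := by
    rw [smul_mul_assoc, h.mul_right, ← Complex.coe_smul, smul_smul]
  -- `exp` does not depend on the norm, so any Banach-algebra norm on matrices will do.
  have hl : E r * U A t = Complex.exp (t * Complex.I * θ r) • E r := by
    open scoped Matrix.Norms.Operator in
    exact Complex.exp_eq_exp_ℂ ▸ mul_exp_of_mul_eq_smul (hleft _)
  have hr : U A (-t) * E s = Complex.exp (↑(-t) * Complex.I * θ s) • E s := by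
    open scoped Matrix.Norms.Operator in
    exact Complex.exp_eq_exp_ℂ ▸ exp_mul_of_mul_eq_smul (hright _)
  calc E r * (U A t * P * U A (-t)) * E s = (E r * U A t) * P * (U A (-t) * E s) := by
        simp only [mul_assoc]
    _ = (Complex.exp (t * Complex.I * θ r) * Complex.exp (↑(-t) * Complex.I * θ s)) •
          (E r * P * E s) := by
        rw [hl, hr, smul_mul_assoc, smul_mul_assoc, mul_smul_comm, smul_smul]
    _ = _ := by
        rw [← Complex.exp_add]
        push_cast
        ring_nf

theorem stmt_3_general {n m : ℕ}
    (A : Matrix (Fin n) (Fin n) ℂ)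
    (hAreal : ∀ i j, (A i j).im = 0)
    (θ : Fin m → ℝ) (hθ : Function.Injective θ)
    (E : Fin m → Matrix (Fin n) (Fin n) ℂ)
    (hEmul : ∀ r s : Fin m, E r * E s = if r = s then E r else 0)
    (hEsum : ∑ r, E r = 1)
    (hspec : A = ∑ r, (θ r : ℂ) • E r)
    (P Q : Matrix (Fin n) (Fin n) ℂ)
    (hPreal : ∀ i j, (P i j).im = 0)
    (hQreal : ∀ i j, (Q i j).im = 0)
    (t : ℝ) (hpst : U A t * P * U A (-t) = Q) :
    (∀ r : Fin m, E r * Q * E r = E r * P * E r) ∧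
      (∀ r s : Fin m, (¬ ∃ k : ℤ, t * (θ r - θ s) = k * Real.pi) →
        E r * P * E s = 0 ∧ E r * Q * E s = 0) ∧
      (∀ r s : Fin m, ∃ ε : ℝ, (ε = 1 ∨ ε = -1) ∧
        E r * Q * E s = (ε : ℂ) • (E r * P * E s)) := by
  have hdec : IsSpectralDecomposition A θ E :=
    ⟨hθ, hEmul, hEsum, by simpa only [Complex.coe_smul] using hspec⟩
  have hE (r : Fin m) : conjEntrywise (E r) = E r :=
    hdec.apply_eq_self conjEntrywise.toAlgHom (conjEntrywise_eq_self_of_im_eq_zero hAreal) r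
  have hsandwich {M : Matrix (Fin n) (Fin n) ℂ} (hM : ∀ i j, (M i j).im = 0) (r s : Fin m) :
      conjEntrywise (E r * M * E s) = E r * M * E s := by
    rw [map_mul, map_mul, hE, hE, conjEntrywise_eq_self_of_im_eq_zero hM]
  have hphase (r s : Fin m) : E r * Q * E s =
      Complex.exp (↑(t * (θ r - θ s)) * Complex.I) • (E r * P * E s) :=
    hpst ▸ hdec.mul_U_mul_U_neg_mul t P r s
  have hdichotomy (r s : Fin m) : Real.sin (t * (θ r - θ s)) = 0 ∨ E r * P * E s = 0 := by
    simpa only [Complex.exp_ofReal_mul_I_im] using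
      im_eq_zero_or_eq_zero_of_eq_smul (hsandwich hPreal r s) (hsandwich hQreal r s) (hphase r s)
  refine ⟨fun r => by simpa using hphase r r, fun r s hk => ?_, fun r s => ?_⟩
  · have hP0 := (hdichotomy r s).resolve_left fun h0 =>
      hk (by obtain ⟨k, hk⟩ := Real.sin_eq_zero_iff.mp h0; exact ⟨k, hk.symm⟩)
    exact ⟨hP0, by rw [hphase, hP0, smul_zero]⟩
  · rcases hdichotomy r s with h0 | hP0
    · refine ⟨Real.cos (t * (θ r - θ s)), Real.sin_eq_zero_iff_cos_eq.mp h0, ?_⟩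
      rw [hphase, Complex.exp_mul_I, ← Complex.ofReal_cos, ← Complex.ofReal_sin, h0]
      simp
    · exact ⟨1, Or.inl rfl, by rw [hphase, hP0, smul_zero, smul_zero]⟩

/-- If `A` is real symmetric with spectral decomposition
`A = ∑ θ_r • E_r`, `P` and `Q` are real density matrices, and there is perfect
state transfer from `P` to `Q` at time `t`, then
(a) `E_r·Q·E_r = E_r·P·E_r` for all `r`;
(b) if `t(θ_r − θ_s)` is not an integer multiple of `π`, then
    `E_r·P·E_s = 0` and `E_r·Q·E_s = 0`;
(c) for every pair `(r,s)` there is a sign `ε = ±1` with `E_r·Q·E_s = ε·E_r·P·E_s`. -/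
theorem stmt_3 {n m : ℕ} (hn : 1 ≤ n)
    (A : Matrix (Fin n) (Fin n) ℂ)
    (hAreal : ∀ i j, (A i j).im = 0) (hAsym : Aᵀ = A)
    (θ : Fin m → ℝ) (hθ : Function.Injective θ)
    (E : Fin m → Matrix (Fin n) (Fin n) ℂ)
    (hE0 : ∀ r, E r ≠ 0)
    (hEherm : ∀ r, (E r).IsHermitian)
    (hEmul : ∀ r s : Fin m, E r * E s = if r = s then E r else 0)
    (hEsum : ∑ r, E r = 1)
    (hspec : A = ∑ r, (θ r : ℂ) • E r)
    (P Q : Matrix (Fin n) (Fin n) ℂ)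
    (hP : P.PosSemidef) (hPtr : P.trace = 1) (hPreal : ∀ i j, (P i j).im = 0)
    (hQ : Q.PosSemidef) (hQtr : Q.trace = 1) (hQreal : ∀ i j, (Q i j).im = 0)
    (t : ℝ) (hpst : U A t * P * U A (-t) = Q) :
    (∀ r : Fin m, E r * Q * E r = E r * P * E r) ∧
      (∀ r s : Fin m, (¬ ∃ k : ℤ, t * (θ r - θ s) = k * Real.pi) →
        E r * P * E s = 0 ∧ E r * Q * E s = 0) ∧
      (∀ r s : Fin m, ∃ ε : ℝ, (ε = 1 ∨ ε = -1) ∧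
        E r * Q * E s = (ε : ℂ) • (E r * P * E s)) :=
  stmt_3_general A hAreal θ hθ E hEmul hEsum hspec P Q hPreal hQreal t hpst
end

section
/- Let A be a real symmetric n×n matrix with spectral decomposition given by distinct real eigenvalues θ_1,…,θ_m and idempotents E_1,…,E_m, and let P and Q be real density matrices. If there is pretty good state transfer from P to Q, then E_r·P·E_r = E_r·Q·E_r for every r, and for every pair (r,s) there is a sign ε ∈ {1,−1} such that E_r·P·E_s = ε·E_r·Q·E_s. -/
/-!
Each spectral idempotent satisfies `E_r U(t) = e^{itθ_r} E_r`, so compressing the orbit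
`U(t) P U(-t)` to `E_r · E_s` multiplies `E_r P E_s` by the phase `e^{it(θ_r - θ_s)}`. Pretty good
state transfer puts `Q` in the closure of the orbit, hence `E_r Q E_s = c • E_r P E_s` with
`|c| = 1`, and `c = 1` when `r = s`. Complex conjugation maps the spectral decomposition of the real
matrix `A` to another one, so by uniqueness the `E_r` are real; then `c` is real, i.e. `c = ±1`.
-/

open Matrix
open scoped ComplexOrder

/-- The Frobenius norm of a complex matrix. -/
noncomputable def fnorm {n : ℕ} (M : Matrix (Fin n) (Fin n) ℂ) : ℝ :=
  Real.sqrt (∑ i, ∑ j, ‖M i j‖ ^ 2)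

open Complex Set

theorem fnorm_eq_frobenius_norm {n : ℕ} (M : Matrix (Fin n) (Fin n) ℂ) :
    fnorm M = @Norm.norm _ Matrix.frobeniusNormedAddCommGroup.toNorm M := by
  simp_rw [fnorm, frobenius_norm_def, Real.sqrt_eq_rpow, Real.rpow_two]

theorem mem_closure_range_of_fnorm_sub_lt {α : Type*} {n : ℕ}
    {f : α → Matrix (Fin n) (Fin n) ℂ} {Q : Matrix (Fin n) (Fin n) ℂ}
    (h : ∀ ε : ℝ, 0 < ε → ∃ t, fnorm (f t - Q) < ε) : Q ∈ closure (range f) := by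
  let _ := @Matrix.frobeniusNormedAddCommGroup (Fin n) (Fin n) ℂ _ _ _
  refine Metric.mem_closure_iff.2 fun ε hε => ?_
  obtain ⟨t, ht⟩ := h ε hε
  exact ⟨f t, mem_range_self t, by rwa [dist_comm, dist_eq_norm, ← fnorm_eq_frobenius_norm]⟩

theorem closure_range_exp_mul_I_smul_subset {α V : Type*} [TopologicalSpace V] [T2Space V]
    [SMul ℂ V] [ContinuousSMul ℂ V] (f : α → ℝ) (v : V) :
    closure (range fun t => exp (f t * I) • v) ⊆ (· • v) '' Metric.sphere (0 : ℂ) 1 := by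
  refine closure_minimal ?_ ((isCompact_sphere 0 1).image (by fun_prop)).isClosed
  rintro _ ⟨t, rfl⟩
  exact ⟨_, by simp [norm_exp_ofReal_mul_I], rfl⟩

theorem mapMatrix_conjAe_eq_self_iff {ι : Type*} [Fintype ι] [DecidableEq ι]
    {M : Matrix ι ι ℂ} : conjAe.mapMatrix M = M ↔ ∀ i j, (M i j).im = 0 := by
  rw [AlgEquiv.mapMatrix_apply, ← Matrix.ext_iff]
  simp [conj_eq_iff_im]

theorem exists_sign_smul_of_eq_smul {ι : Type*} {M N : Matrix ι ι ℂ}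
    (hM : ∀ i j, (M i j).im = 0) (hN : ∀ i j, (N i j).im = 0) {c : ℂ} (hc : ‖c‖ = 1)
    (hNM : N = c • M) : ∃ ε : ℝ, (ε = 1 ∨ ε = -1) ∧ M = (ε : ℂ) • N := by
  by_cases hM0 : M = 0
  · exact ⟨1, Or.inl rfl, by simp [hNM, hM0]⟩
  obtain ⟨i, j, hij⟩ : ∃ i j, M i j ≠ 0 := by
    by_contra! h
    exact hM0 (Matrix.ext h)
  have hcim : c.im = 0 := by
    have h := hN i j
    rw [hNM, Matrix.smul_apply, smul_eq_mul, mul_im, hM i j, mul_zero, zero_add] at h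
    exact (mul_eq_zero.1 h).resolve_right fun hre => hij (Complex.ext hre (hM i j))
  have hc_re : c = (c.re : ℂ) := Complex.ext rfl (by simpa using hcim)
  have hsign : c.re = 1 ∨ c.re = -1 := by
    rw [hc_re, norm_real, Real.norm_eq_abs] at hc
    exact abs_eq zero_le_one |>.1 hc
  refine ⟨c.re, hsign, ?_⟩
  rw [hNM, smul_smul, hc_re, ← ofReal_mul]
  rcases hsign with h | h <;> simp [h]

section Exp

attribute [local instance] Matrix.linftyOpNormedRing Matrix.linftyOpNormedAlgebra

variable {ι : Type*} [Fintype ι] [DecidableEq ι] {B X : Matrix ι ι ℂ} {c : ℂ}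

theorem Matrix.mul_exp_of_mul_eq_smul (h : B * X = c • B) :
    B * NormedSpace.exp X = exp c • B := by
  have hX : SemiconjBy B X (algebraMap ℂ _ c) := by
    rwa [SemiconjBy, ← Algebra.smul_def]
  refine hX.exp_right.eq.trans ?_
  rw [← NormedSpace.algebraMap_exp_comm, ← Algebra.smul_def, exp_eq_exp_ℂ]

theorem Matrix.exp_mul_of_mul_eq_smul (h : X * B = c • B) :
    NormedSpace.exp X * B = exp c • B := by
  have hX : SemiconjBy B (algebraMap ℂ _ c) X := by
    rw [SemiconjBy, ← Algebra.commutes, ← Algebra.smul_def, h]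
  refine hX.exp_right.eq.symm.trans ?_
  rw [← NormedSpace.algebraMap_exp_comm, ← Algebra.commutes, ← Algebra.smul_def, exp_eq_exp_ℂ]

end Exp

section Orthogonal

variable {ι S R : Type*} [Fintype ι] [DecidableEq ι] [CommSemiring S] [Semiring R]
  [Algebra S R] {e : ι → R}

theorem mul_sum_smul_of_orthogonal (he : ∀ i j, e i * e j = if i = j then e i else 0)
    (θ : ι → S) (i : ι) : e i * ∑ j, θ j • e j = θ i • e i := by
  simp [Finset.mul_sum, he]

theorem sum_smul_mul_of_orthogonal (he : ∀ i j, e i * e j = if i = j then e i else 0)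
    (θ : ι → S) (i : ι) : (∑ j, θ j • e j) * e i = θ i • e i := by
  simp [Finset.sum_mul, he]

end Orthogonal

theorem eq_of_sum_eq_one_of_mul_eq_smul {ι K R : Type*} [Fintype ι] [Field K] [Ring R]
    [Algebra K R] {a : R} {θ : ι → K} (hθ : Function.Injective θ) {e f : ι → R}
    (he : ∑ i, e i = 1) (hf : ∑ i, f i = 1)
    (hea : ∀ i, e i * a = θ i • e i) (haf : ∀ i, a * f i = θ i • f i) (i : ι) :
    e i = f i := by
  have horth : ∀ i j, i ≠ j → e i * f j = 0 := by
    intro i j hij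
    have h : (θ i - θ j) • (e i * f j) = 0 := by
      rw [sub_smul, ← smul_mul_assoc, ← hea, ← mul_smul_comm, ← haf, mul_assoc, sub_self]
    exact (smul_eq_zero.1 h).resolve_left (sub_ne_zero.2 (hθ.ne hij))
  calc e i = e i * ∑ j, f j := by rw [hf, mul_one]
    _ = e i * f i := by
      rw [Finset.mul_sum, Finset.sum_eq_single i (fun j _ hj => horth i j hj.symm) (by simp)]
    _ = (∑ j, e j) * f i := by
      rw [Finset.sum_mul, Finset.sum_eq_single i (fun j _ hj => horth j i hj) (by simp)]
    _ = f i := by rw [he, one_mul]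

section Spectral

variable {n m : ℕ} {A : Matrix (Fin n) (Fin n) ℂ} {θ : Fin m → ℝ}
  {E : Fin m → Matrix (Fin n) (Fin n) ℂ}

theorem mul_U_of_spectral (hEmul : ∀ r s : Fin m, E r * E s = if r = s then E r else 0)
    (hspec : A = ∑ r, (θ r : ℂ) • E r) (r : Fin m) (t : ℝ) :
    E r * U A t = exp ((t * θ r : ℝ) * I) • E r := by
  refine Matrix.mul_exp_of_mul_eq_smul ?_
  rw [mul_smul_comm, hspec, mul_sum_smul_of_orthogonal hEmul, smul_smul]
  push_cast
  ring_nf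

theorem U_mul_of_spectral (hEmul : ∀ r s : Fin m, E r * E s = if r = s then E r else 0)
    (hspec : A = ∑ r, (θ r : ℂ) • E r) (s : Fin m) (t : ℝ) :
    U A t * E s = exp ((t * θ s : ℝ) * I) • E s := by
  refine Matrix.exp_mul_of_mul_eq_smul ?_
  rw [smul_mul_assoc, hspec, sum_smul_mul_of_orthogonal hEmul, smul_smul]
  push_cast
  ring_nf

theorem mul_U_mul_U_neg_mul_of_spectral
    (hEmul : ∀ r s : Fin m, E r * E s = if r = s then E r else 0)
    (hspec : A = ∑ r, (θ r : ℂ) • E r) (r s : Fin m) (t : ℝ) (P : Matrix (Fin n) (Fin n) ℂ) :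
    E r * (U A t * P * U A (-t)) * E s = exp ((t * (θ r - θ s) : ℝ) * I) • (E r * P * E s) := by
  calc E r * (U A t * P * U A (-t)) * E s = (E r * U A t) * P * (U A (-t) * E s) := by
        simp only [mul_assoc]
    _ = _ := by
      rw [mul_U_of_spectral hEmul hspec, U_mul_of_spectral hEmul hspec, smul_mul_assoc,
        mul_smul_comm, smul_mul_assoc, smul_smul, ← Complex.exp_add]
      push_cast
      ring_nf

theorem mapMatrix_conjAe_spectral_idempotent (hAreal : conjAe.mapMatrix A = A) (hθ : Function.Injective θ)
    (hEmul : ∀ r s : Fin m, E r * E s = if r = s then E r else 0) (hEsum : ∑ r, E r = 1)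
    (hspec : A = ∑ r, θ r • E r) (r : Fin m) :
    conjAe.mapMatrix (E r) = E r := by
  refine (eq_of_sum_eq_one_of_mul_eq_smul (a := A) (f := fun s => conjAe.mapMatrix (E s))
    hθ hEsum ?_ ?_ ?_ r).symm
  · rw [← map_sum, hEsum, map_one]
  · intro r
    rw [hspec, mul_sum_smul_of_orthogonal hEmul]
  · intro s
    rw [← hAreal, ← map_mul, hspec, sum_smul_mul_of_orthogonal hEmul, map_smul]

end Spectral

theorem stmt_5_general {n m : ℕ}
    (A : Matrix (Fin n) (Fin n) ℂ)
    (hAreal : ∀ i j, (A i j).im = 0)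
    (θ : Fin m → ℝ) (hθ : Function.Injective θ)
    (E : Fin m → Matrix (Fin n) (Fin n) ℂ)
    (hEmul : ∀ r s : Fin m, E r * E s = if r = s then E r else 0)
    (hEsum : ∑ r, E r = 1)
    (hspec : A = ∑ r, (θ r : ℂ) • E r)
    (P Q : Matrix (Fin n) (Fin n) ℂ)
    (hPreal : ∀ i j, (P i j).im = 0)
    (hQreal : ∀ i j, (Q i j).im = 0)
    (hpgst : ∀ ε : ℝ, 0 < ε → ∃ t : ℝ, fnorm (U A t * P * U A (-t) - Q) < ε) :
    (∀ r : Fin m, E r * P * E r = E r * Q * E r) ∧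
      (∀ r s : Fin m, ∃ ε : ℝ, (ε = 1 ∨ ε = -1) ∧
        E r * P * E s = (ε : ℂ) • (E r * Q * E s)) := by
  have hEreal : ∀ r, conjAe.mapMatrix (E r) = E r :=
    mapMatrix_conjAe_spectral_idempotent (mapMatrix_conjAe_eq_self_iff.2 hAreal) hθ hEmul hEsum
      (by simpa only [Complex.coe_smul] using hspec)
  have hsandwich_real : ∀ {R : Matrix (Fin n) (Fin n) ℂ}, (∀ i j, (R i j).im = 0) →
      ∀ r s i j, ((E r * R * E s) i j).im = 0 := fun hR r s =>
    mapMatrix_conjAe_eq_self_iff.1 <| by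
      rw [map_mul, map_mul, hEreal, hEreal, mapMatrix_conjAe_eq_self_iff.2 hR]
  have hmem : ∀ r s, E r * Q * E s ∈
      closure (range fun t : ℝ => exp ((t * (θ r - θ s) : ℝ) * I) • (E r * P * E s)) := by
    intro r s
    refine map_mem_closure (f := fun X => E r * X * E s) (by fun_prop)
      (mem_closure_range_of_fnorm_sub_lt hpgst) ?_
    rintro _ ⟨t, rfl⟩
    exact ⟨t, (mul_U_mul_U_neg_mul_of_spectral hEmul hspec r s t P).symm⟩
  refine ⟨fun r => ?_, fun r s => ?_⟩
  · simpa [eq_comm] using hmem r r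
  · obtain ⟨c, hc, hQP⟩ := closure_range_exp_mul_I_smul_subset _ _ (hmem r s)
    exact exists_sign_smul_of_eq_smul (hsandwich_real hPreal r s) (hsandwich_real hQreal r s)
      (mem_sphere_zero_iff_norm.1 hc) hQP.symm

/-- If `A` is real symmetric with spectral decomposition
`A = ∑ θ_r • E_r`, `P`, `Q` are real density matrices, and there is pretty good
state transfer from `P` to `Q`, then `E_r·P·E_r = E_r·Q·E_r` for all `r` and for
every pair `(r,s)` there is a sign `ε = ±1` with `E_r·P·E_s = ε·E_r·Q·E_s`. -/
theorem stmt_5 {n m : ℕ} (hn : 1 ≤ n)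
    (A : Matrix (Fin n) (Fin n) ℂ)
    (hAreal : ∀ i j, (A i j).im = 0) (hAsym : Aᵀ = A)
    (θ : Fin m → ℝ) (hθ : Function.Injective θ)
    (E : Fin m → Matrix (Fin n) (Fin n) ℂ)
    (hE0 : ∀ r, E r ≠ 0)
    (hEherm : ∀ r, (E r).IsHermitian)
    (hEmul : ∀ r s : Fin m, E r * E s = if r = s then E r else 0)
    (hEsum : ∑ r, E r = 1)
    (hspec : A = ∑ r, (θ r : ℂ) • E r)
    (P Q : Matrix (Fin n) (Fin n) ℂ)
    (hP : P.PosSemidef) (hPtr : P.trace = 1) (hPreal : ∀ i j, (P i j).im = 0)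
    (hQ : Q.PosSemidef) (hQtr : Q.trace = 1) (hQreal : ∀ i j, (Q i j).im = 0)
    (hpgst : ∀ ε : ℝ, 0 < ε → ∃ t : ℝ, fnorm (U A t * P * U A (-t) - Q) < ε) :
    (∀ r : Fin m, E r * P * E r = E r * Q * E r) ∧
      (∀ r s : Fin m, ∃ ε : ℝ, (ε = 1 ∨ ε = -1) ∧
        E r * P * E s = (ε : ℂ) • (E r * Q * E s)) :=
  stmt_5_general A hAreal θ hθ E hEmul hEsum hspec P Q hPreal hQreal hpgst
end

section
/- Let A be a real symmetric n×n matrix and let P be a real density matrix. Then the set of real density matrices Q such that there is pretty good state transfer from P to Q is finite. -/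
/-!
Diagonalize `A = V D Vᵀ` with `V` real orthogonal and `D = diag θ` real. In the eigenbasis the
evolution acts entrywise: the `(j, k)` entry of `Vᵀ U(t) P U(-t) V` is
`exp(it(θⱼ - θₖ))` times that of `P' = Vᵀ P V`. Hence if `Q` is a limit of the evolved states,
each entry of `Q' = Vᵀ Q V` has the modulus of the corresponding entry of `P'`. When `P` and `Q`
are real, `P'` and `Q'` are real as well, so `Q'ⱼₖ = ± P'ⱼₖ`, leaving at most `2^(n²)`
candidates for `Q`.
-/

open Matrix
open scoped ComplexOrder

open Complex

section

variable {n : ℕ}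

lemma norm_apply_le_fnorm (M : Matrix (Fin n) (Fin n) ℂ) (i j : Fin n) : ‖M i j‖ ≤ fnorm M := by
  rw [fnorm, ← Real.sqrt_sq (norm_nonneg (M i j))]
  refine Real.sqrt_le_sqrt ?_
  calc ‖M i j‖ ^ 2 ≤ ∑ j', ‖M i j'‖ ^ 2 :=
        Finset.single_le_sum (f := fun j' => ‖M i j'‖ ^ 2) (fun _ _ => by positivity)
          (Finset.mem_univ j)
    _ ≤ ∑ i', ∑ j', ‖M i' j'‖ ^ 2 :=
        Finset.single_le_sum (f := fun i' => ∑ j', ‖M i' j'‖ ^ 2) (fun _ _ => by positivity)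
          (Finset.mem_univ i)

lemma fnorm_eq_sqrt_re_trace (M : Matrix (Fin n) (Fin n) ℂ) :
    fnorm M = √(Mᴴ * M).trace.re := by
  rw [fnorm, Finset.sum_comm]
  congr 1
  simp only [trace, diag, re_sum, mul_apply, conjTranspose_apply, RCLike.star_def, Complex.sq_norm,
    normSq_apply, mul_re, conj_re, conj_im]
  ring_nf

lemma fnorm_conjTranspose_mul_mul {V : Matrix (Fin n) (Fin n) ℂ} (hV : V ∈ unitaryGroup (Fin n) ℂ)
    (M : Matrix (Fin n) (Fin n) ℂ) : fnorm (Vᴴ * M * V) = fnorm M := by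
  have hVV : V * Vᴴ = 1 := mem_unitaryGroup_iff.mp hV
  have : (Vᴴ * M * V)ᴴ * (Vᴴ * M * V) = Vᴴ * (Mᴴ * M) * V := by
    simp only [conjTranspose_mul, conjTranspose_conjTranspose, Matrix.mul_assoc]
    rw [← Matrix.mul_assoc V, hVV, Matrix.one_mul]
  rw [fnorm_eq_sqrt_re_trace, fnorm_eq_sqrt_re_trace, this, trace_mul_cycle, ← Matrix.mul_assoc,
    hVV, Matrix.one_mul]

lemma U_mul_diagonal_mul_conjTranspose {V : Matrix (Fin n) (Fin n) ℂ}
    (hV : V ∈ unitaryGroup (Fin n) ℂ) (d : Fin n → ℂ) (t : ℝ) :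
    U (V * diagonal d * Vᴴ) t = V * diagonal (fun k => exp (t * I * d k)) * Vᴴ := by
  have hinv : V⁻¹ = Vᴴ := inv_eq_left_inv (mem_unitaryGroup_iff'.mp hV)
  have hunit : IsUnit V := Unitary.isUnit_coe (U := ⟨V, hV⟩)
  rw [U, ← Matrix.smul_mul, ← Matrix.mul_smul, ← diagonal_smul, ← hinv,
    Matrix.exp_conj _ _ hunit, Matrix.exp_diagonal]
  congr
  ext k
  simp [Complex.exp_eq_exp_ℂ]

lemma conjTranspose_mul_U_mul_U_neg_mul_apply {V : Matrix (Fin n) (Fin n) ℂ}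
    (hV : V ∈ unitaryGroup (Fin n) ℂ) (d : Fin n → ℂ) (t : ℝ) (P : Matrix (Fin n) (Fin n) ℂ)
    (j k : Fin n) :
    (Vᴴ * (U (V * diagonal d * Vᴴ) t * P * U (V * diagonal d * Vᴴ) (-t)) * V) j k =
      exp (t * I * (d j - d k)) * (Vᴴ * P * V) j k := by
  have hVV : Vᴴ * V = 1 := mem_unitaryGroup_iff'.mp hV
  have hcancel : ∀ E : Matrix (Fin n) (Fin n) ℂ, Vᴴ * (V * E) = E := fun E => by
    rw [← Matrix.mul_assoc, hVV, Matrix.one_mul]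
  rw [U_mul_diagonal_mul_conjTranspose hV, U_mul_diagonal_mul_conjTranspose hV]
  simp only [Matrix.mul_assoc, hcancel, hVV, Matrix.mul_one]
  simp only [← Matrix.mul_assoc, diagonal_mul, mul_diagonal]
  rw [mul_sub, sub_eq_add_neg, exp_add, ofReal_neg]
  ring_nf

lemma norm_exp_mul_sub_le_fnorm {V : Matrix (Fin n) (Fin n) ℂ}
    (hV : V ∈ unitaryGroup (Fin n) ℂ) (d : Fin n → ℂ) (t : ℝ) (P Q : Matrix (Fin n) (Fin n) ℂ)
    (j k : Fin n) :
    ‖exp (t * I * (d j - d k)) * (Vᴴ * P * V) j k - (Vᴴ * Q * V) j k‖ ≤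
      fnorm (U (V * diagonal d * Vᴴ) t * P * U (V * diagonal d * Vᴴ) (-t) - Q) := by
  rw [← conjTranspose_mul_U_mul_U_neg_mul_apply hV, ← Matrix.sub_apply, ← Matrix.sub_mul,
    ← Matrix.mul_sub, ← fnorm_conjTranspose_mul_mul hV]
  exact norm_apply_le_fnorm _ _ _

end

lemma im_mul_apply_eq_zero {l m o : Type*} [Fintype m] {M : Matrix l m ℂ} {N : Matrix m o ℂ}
    (hM : ∀ i j, (M i j).im = 0) (hN : ∀ i j, (N i j).im = 0) (i : l) (k : o) :
    ((M * N) i k).im = 0 := by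
  simp [mul_apply, im_sum, mul_im, hM, hN]

lemma im_conjTranspose_mul_mul_apply_eq_zero {l m : Type*} [Fintype l] {V : Matrix l m ℂ}
    {M : Matrix l l ℂ} (hV : ∀ i j, (V i j).im = 0) (hM : ∀ i j, (M i j).im = 0) (j k : m) :
    ((Vᴴ * M * V) j k).im = 0 :=
  im_mul_apply_eq_zero (im_mul_apply_eq_zero (fun i j => by simp [hV]) hM) hV j k

lemma exists_real_unitary_diagonalization {ι : Type*} [Fintype ι] [DecidableEq ι]
    {A : Matrix ι ι ℂ} (hAreal : ∀ i j, (A i j).im = 0) (hAsym : Aᵀ = A) :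
    ∃ V ∈ unitaryGroup ι ℂ, (∀ i j, (V i j).im = 0) ∧
      ∃ θ : ι → ℝ, A = V * diagonal (fun k => (θ k : ℂ)) * Vᴴ := by
  set B : Matrix ι ι ℝ := A.map re
  have hA : A = B.map ofReal := by
    ext i j
    exact Complex.ext rfl (by simp [hAreal])
  have hB : B.IsHermitian := by
    rw [IsHermitian, conjTranspose_eq_transpose_of_trivial, ← transpose_map, hAsym]
  set W : Matrix ι ι ℝ := (hB.eigenvectorUnitary : Matrix ι ι ℝ)
  have hWstar : (W.map ofReal)ᴴ = (star W).map ofReal :=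
    (conjTranspose_map _ fun x => (conj_ofReal x).symm).symm
  refine ⟨W.map ofReal, ?_, fun i j => ofReal_im _, hB.eigenvalues, ?_⟩
  · rw [mem_unitaryGroup_iff, star_eq_conjTranspose, hWstar]
    change W.map ofRealHom * (star W).map ofRealHom = 1
    rw [← Matrix.map_mul, mem_unitaryGroup_iff.mp hB.eigenvectorUnitary.2]
    exact Matrix.map_one _ (map_zero _) (map_one _)
  · rw [hWstar]
    change A = W.map ofRealHom * (diagonal fun k => ofRealHom (hB.eigenvalues k)) *
      (star W).map ofRealHom
    rw [← diagonal_map (d := hB.eigenvalues) (map_zero ofRealHom), ← Matrix.map_mul,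
      ← Matrix.map_mul, hA]
    congr 1
    simpa [RCLike.ofReal_real_eq_id] using hB.spectral_theorem

lemma norm_eq_of_forall_unit_mul_near {p q : ℂ}
    (h : ∀ ε > 0, ∃ u : ℂ, ‖u‖ = 1 ∧ ‖u * p - q‖ < ε) : ‖q‖ = ‖p‖ := by
  refine eq_of_forall_dist_le fun ε hε => ?_
  obtain ⟨u, hu, hlt⟩ := h ε hε
  calc dist ‖q‖ ‖p‖ = dist ‖u * p‖ ‖q‖ := by rw [norm_mul, hu, one_mul, dist_comm]
    _ ≤ ‖u * p - q‖ := dist_norm_norm_le _ _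
    _ ≤ ε := hlt.le

lemma eq_or_eq_neg_of_norm_eq {p q : ℂ} (hp : p.im = 0) (hq : q.im = 0) (h : ‖q‖ = ‖p‖) :
    q = p ∨ q = -p := by
  lift p to ℝ using hp
  lift q to ℝ using hq
  rw [norm_real, norm_real, Real.norm_eq_abs, Real.norm_eq_abs, abs_eq_abs] at h
  exact_mod_cast h

lemma finite_setOf_forall_eq_or_eq_neg {ι κ R : Type*} [Finite ι] [Finite κ] [Neg R]
    (P : Matrix ι κ R) : {M : Matrix ι κ R | ∀ i j, M i j = P i j ∨ M i j = -P i j}.Finite := by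
  refine (Set.Finite.pi fun i => Set.Finite.pi fun j => Set.toFinite {P i j, -P i j}).subset ?_
  intro M (hM : ∀ i j, _)
  simpa [Set.mem_pi] using hM

theorem stmt_6_general {n : ℕ}
    (A : Matrix (Fin n) (Fin n) ℂ)
    (hAreal : ∀ i j, (A i j).im = 0) (hAsym : Aᵀ = A)
    (P : Matrix (Fin n) (Fin n) ℂ)
    (hPreal : ∀ i j, (P i j).im = 0) :
    {Q : Matrix (Fin n) (Fin n) ℂ |
        Q.PosSemidef ∧ Q.trace = 1 ∧ (∀ i j, (Q i j).im = 0) ∧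
        ∀ ε : ℝ, 0 < ε → ∃ t : ℝ, fnorm (U A t * P * U A (-t) - Q) < ε}.Finite := by
  obtain ⟨V, hV, hVreal, θ, rfl⟩ := exists_real_unitary_diagonalization hAreal hAsym
  have hVV : V * Vᴴ = 1 := mem_unitaryGroup_iff.mp hV
  refine ((finite_setOf_forall_eq_or_eq_neg (Vᴴ * P * V)).image fun M => V * M * Vᴴ).subset ?_
  rintro Q ⟨-, -, hQreal, hQ⟩
  refine ⟨Vᴴ * Q * V, fun j k => ?_, ?_⟩
  · refine eq_or_eq_neg_of_norm_eq (im_conjTranspose_mul_mul_apply_eq_zero hVreal hPreal j k)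
      (im_conjTranspose_mul_mul_apply_eq_zero hVreal hQreal j k)
      (norm_eq_of_forall_unit_mul_near fun ε hε => ?_)
    obtain ⟨t, ht⟩ := hQ ε hε
    refine ⟨exp (t * I * (θ j - θ k)), ?_,
      (norm_exp_mul_sub_le_fnorm hV (fun k => (θ k : ℂ)) t P Q j k).trans_lt ht⟩
    rw [show (t : ℂ) * I * (θ j - θ k) = ((t * (θ j - θ k) : ℝ) : ℂ) * I by push_cast; ring,
      norm_exp_ofReal_mul_I]
  · simp only [Matrix.mul_assoc, hVV, Matrix.mul_one]
    rw [← Matrix.mul_assoc, hVV, Matrix.one_mul]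

/-- If `A` is real symmetric and `P` is a real density matrix, then
the set of real density matrices `Q` admitting pretty good state transfer from
`P` is finite. -/
theorem stmt_6 {n : ℕ} (hn : 1 ≤ n)
    (A : Matrix (Fin n) (Fin n) ℂ)
    (hAreal : ∀ i j, (A i j).im = 0) (hAsym : Aᵀ = A)
    (P : Matrix (Fin n) (Fin n) ℂ)
    (hP : P.PosSemidef) (hPtr : P.trace = 1)
    (hPreal : ∀ i j, (P i j).im = 0) :
    {Q : Matrix (Fin n) (Fin n) ℂ |
        Q.PosSemidef ∧ Q.trace = 1 ∧ (∀ i j, (Q i j).im = 0) ∧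
        ∀ ε : ℝ, 0 < ε → ∃ t : ℝ, fnorm (U A t * P * U A (-t) - Q) < ε}.Finite :=
  stmt_6_general A hAreal hAsym P hPreal
end

section
/- Let A be a Hermitian n×n matrix and P a density matrix, and let S = {σ ∈ ℝ : U(σ)·P·U(−σ) = P}. Then S is an additive subgroup of ℝ; moreover, if S contains a strictly decreasing sequence of positive numbers tending to 0, then A·P = P·A and U(t)·P·U(−t) = P for all real t. -/
open Matrix
open scoped ComplexOrder

open Filter Topology

theorem AddSubgroup.eq_top_of_isClosed_of_tendsto_zero {G ι : Type*} [AddCommGroup G]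
    [LinearOrder G] [IsOrderedAddMonoid G] [TopologicalSpace G] [OrderTopology G] [Archimedean G]
    {l : Filter ι} [l.NeBot] {S : AddSubgroup G} (hS : IsClosed (S : Set G)) {f : ι → G}
    (hpos : ∀ i, 0 < f i) (hlim : Tendsto f l (𝓝 0)) (hmem : ∀ i, f i ∈ S) : S = ⊤ := by
  have hdense : Dense (S : Set G) := S.dense_of_not_isolated_zero fun ε hε =>
    have ⟨i, hi⟩ := (hlim.eventually (Iio_mem_nhds hε)).exists
    ⟨f i, hmem i, hpos i, hi⟩
  rw [← AddSubgroup.coe_eq_univ, ← hS.closure_eq, hdense.closure_eq]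

namespace U

variable {n : ℕ} (A : Matrix (Fin n) (Fin n) ℂ)

theorem eq_exp_smul (t : ℝ) : U A t = NormedSpace.exp (t • (Complex.I • A)) := by
  rw [U, ← smul_assoc, Complex.real_smul]

theorem add (s t : ℝ) : U A (s + t) = U A s * U A t := by
  simp only [eq_exp_smul, add_smul]
  exact Matrix.exp_add_of_commute _ _ (((Commute.refl _).smul_left s).smul_right t)

theorem zero : U A 0 = 1 := by
  simp [eq_exp_smul]

theorem neg_mul_self (t : ℝ) : U A (-t) * U A t = 1 := by
  rw [← add, neg_add_cancel, zero]

theorem mul_neg_self (t : ℝ) : U A t * U A (-t) = 1 := by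
  rw [← add, add_neg_cancel, zero]

theorem conj_eq_iff_commute (P : Matrix (Fin n) (Fin n) ℂ) (t : ℝ) :
    U A t * P * U A (-t) = P ↔ Commute (U A t) P := by
  constructor
  · intro h
    calc U A t * P = U A t * P * (U A (-t) * U A t) := by rw [neg_mul_self, mul_one]
      _ = P * U A t := by rw [← mul_assoc, h]
  · intro h
    rw [h.eq, mul_assoc, mul_neg_self, mul_one]

def periods (P : Matrix (Fin n) (Fin n) ℂ) : AddSubgroup ℝ where
  carrier := {σ | U A σ * P * U A (-σ) = P}
  zero_mem' := by simp [zero]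
  add_mem' {s t} hs ht := by
    simp only [Set.mem_ofPred_eq, conj_eq_iff_commute, add] at *
    exact hs.mul_left ht
  neg_mem' {t} ht := by
    simp only [Set.mem_ofPred_eq, conj_eq_iff_commute] at *
    exact Commute.units_inv_left (u := ⟨U A t, U A (-t), mul_neg_self A t, neg_mul_self A t⟩) ht

section Derivative

attribute [local instance] Matrix.linftyOpNormedRing Matrix.linftyOpNormedAlgebra

theorem hasDerivAt (t : ℝ) : HasDerivAt (U A) (U A t * (Complex.I • A)) t := by
  rw [funext (eq_exp_smul A)]
  exact hasDerivAt_exp_smul_const (𝕂 := ℝ) (Complex.I • A) t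

theorem continuous : Continuous (U A) :=
  continuous_iff_continuousAt.2 fun t => (hasDerivAt A t).continuousAt

theorem commute_of_forall_commute {P : Matrix (Fin n) (Fin n) ℂ}
    (h : ∀ t, Commute (U A t) P) : Commute A P := by
  have hderiv : HasDerivAt (fun t => U A t * P - P * U A t)
      (U A 0 * (Complex.I • A) * P - P * (U A 0 * (Complex.I • A))) 0 :=
    ((hasDerivAt A 0).mul_const P).sub ((hasDerivAt A 0).const_mul P)
  have hconst : (fun t => U A t * P - P * U A t) = fun _ => 0 :=
    funext fun t => sub_eq_zero.2 (h t).eq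
  have h0 := hderiv.unique (hconst ▸ hasDerivAt_const 0 0)
  rw [zero, one_mul, sub_eq_zero, Matrix.smul_mul, Matrix.mul_smul] at h0
  exact smul_right_injective _ Complex.I_ne_zero h0

end Derivative

theorem isClosed_periods (P : Matrix (Fin n) (Fin n) ℂ) : IsClosed (periods A P : Set ℝ) :=
  isClosed_eq (by have := continuous A; fun_prop) continuous_const

end U

open U in
theorem stmt_9_general {n : ℕ}
    (A : Matrix (Fin n) (Fin n) ℂ)
    (P : Matrix (Fin n) (Fin n) ℂ) :
    (∃ G : AddSubgroup ℝ,
        (G : Set ℝ) = {σ : ℝ | U A σ * P * U A (-σ) = P}) ∧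
    (∀ f : ℕ → ℝ, (∀ k, 0 < f k) → StrictAnti f →
        Filter.Tendsto f Filter.atTop (nhds 0) →
        (∀ k, U A (f k) * P * U A (-(f k)) = P) →
        A * P = P * A ∧ ∀ t : ℝ, U A t * P * U A (-t) = P) := by
  refine ⟨⟨periods A P, rfl⟩, fun f hpos _ hlim hper => ?_⟩
  have hall : ∀ t, t ∈ periods A P := (AddSubgroup.eq_top_iff' _).1 <|
    AddSubgroup.eq_top_of_isClosed_of_tendsto_zero (isClosed_periods A P) hpos hlim hper
  exact ⟨(commute_of_forall_commute A fun t => (conj_eq_iff_commute A P t).1 (hall t)).eq, hall⟩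

/-- For a Hermitian `A` and density matrix `P`, the set
`S = {σ : U(σ)·P·U(−σ) = P}` is an additive subgroup of `ℝ`; moreover, if `S`
contains a strictly decreasing sequence of positive reals tending to `0`, then
`A·P = P·A` and `U(t)·P·U(−t) = P` for all `t`. -/
theorem stmt_9 {n : ℕ} (hn : 1 ≤ n)
    (A : Matrix (Fin n) (Fin n) ℂ) (hA : A.IsHermitian)
    (P : Matrix (Fin n) (Fin n) ℂ)
    (hP : P.PosSemidef) (hPtr : P.trace = 1) :
    (∃ G : AddSubgroup ℝ,
        (G : Set ℝ) = {σ : ℝ | U A σ * P * U A (-σ) = P}) ∧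
    (∀ f : ℕ → ℝ, (∀ k, 0 < f k) → StrictAnti f →
        Filter.Tendsto f Filter.atTop (nhds 0) →
        (∀ k, U A (f k) * P * U A (-(f k)) = P) →
        A * P = P * A ∧ ∀ t : ℝ, U A t * P * U A (-t) = P) :=
  stmt_9_general A P
end

section
/- Let A be a real symmetric n×n matrix and let P and Q be distinct real density matrices such that there is perfect state transfer from P to Q at some time t > 0 (i.e. U(t)·P·U(−t) = Q). Then P is periodic: the set of positive periods of P has a least element σ > 0, and perfect state transfer from P to Q occurs at time σ/2, i.e. U(σ/2)·P·U(−σ/2) = Q. -/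
/-!
The periods of `P` form a closed subgroup `G` of `ℝ`. Because `A`, `P` and `Q` are symmetric,
transposing `U(t) P U(-t) = Q` gives `U(-t) P U(t) = Q`, so `2t ∈ G` while `t ∉ G` (as `P ≠ Q`).
Hence `G` is neither trivial nor all of `ℝ`, so being closed it is `σℤ` for its least positive
element `σ`. Writing `2t = kσ`, the integer `k` must be odd, so `σ/2 ≡ t (mod σ)` and the state
at time `σ/2` is the state at time `t`.
-/

open Matrix
open scoped ComplexOrder

section ClosedSubgroup

variable {𝕜 : Type*} [Field 𝕜] [LinearOrder 𝕜] [IsStrictOrderedRing 𝕜] [Archimedean 𝕜]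

theorem AddSubgroup.exists_isLeast_pos_of_isClosed [TopologicalSpace 𝕜] [OrderTopology 𝕜]
    {G : AddSubgroup 𝕜} (hG : IsClosed (G : Set 𝕜)) (hbot : G ≠ ⊥) (htop : G ≠ ⊤) :
    ∃ σ, IsLeast {g | g ∈ G ∧ 0 < g} σ := by
  by_contra hmin
  have hdense := AddSubgroup.dense_of_no_min G hbot hmin
  exact htop (SetLike.coe_injective (by simpa [hG.closure_eq] using hdense.closure_eq))

theorem AddSubgroup.half_sub_mem_of_isLeast {G : AddSubgroup 𝕜} {σ t : 𝕜}
    (hσ : IsLeast {g | g ∈ G ∧ 0 < g} σ) (ht : t ∉ G) (h2t : 2 * t ∈ G) : σ / 2 - t ∈ G := by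
  have hσG : ∀ k : ℤ, (k : 𝕜) * σ ∈ G := fun k => by
    simpa [zsmul_eq_mul] using G.zsmul_mem hσ.1.1 k
  rw [AddSubgroup.cyclic_of_min hσ, AddSubgroup.mem_closure_singleton] at h2t
  obtain ⟨k, hk⟩ := h2t
  rw [zsmul_eq_mul] at hk
  obtain ⟨j, rfl | rfl⟩ := k.even_or_odd'
  · refine absurd ?_ ht
    convert hσG j using 1
    push_cast at hk ⊢
    linarith
  · convert hσG (-j) using 1
    push_cast at hk ⊢
    linarith

end ClosedSubgroup

section Evolution

variable {n : ℕ} (A : Matrix (Fin n) (Fin n) ℂ)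

theorem continuous_U : Continuous (U A) := by
  let _ : NormedRing (Matrix (Fin n) (Fin n) ℂ) := Matrix.linftyOpNormedRing
  let _ : NormedAlgebra ℂ (Matrix (Fin n) (Fin n) ℂ) := Matrix.linftyOpNormedAlgebra
  let _ : NormedAlgebra ℚ (Matrix (Fin n) (Fin n) ℂ) := NormedAlgebra.restrictScalars ℚ ℂ _
  exact NormedSpace.exp_continuous.comp
    ((Complex.continuous_ofReal.mul continuous_const).smul continuous_const)

theorem transpose_U {A : Matrix (Fin n) (Fin n) ℂ} (hA : Aᵀ = A) (s : ℝ) : (U A s)ᵀ = U A s := by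
  rw [U, ← Matrix.exp_transpose, transpose_smul, hA]

noncomputable def evolve (s : ℝ) (X : Matrix (Fin n) (Fin n) ℂ) : Matrix (Fin n) (Fin n) ℂ :=
  U A s * X * U A (-s)

theorem evolve_zero (X : Matrix (Fin n) (Fin n) ℂ) : evolve A 0 X = X := by
  simp [evolve, U_zero]

theorem evolve_add (s t : ℝ) (X : Matrix (Fin n) (Fin n) ℂ) :
    evolve A (s + t) X = evolve A s (evolve A t X) := by
  simp only [evolve, neg_add_rev, U_add, Matrix.mul_assoc]

theorem evolve_neg_evolve (s : ℝ) (X : Matrix (Fin n) (Fin n) ℂ) :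
    evolve A (-s) (evolve A s X) = X := by
  rw [← evolve_add, neg_add_cancel, evolve_zero]

theorem continuous_evolve (X : Matrix (Fin n) (Fin n) ℂ) : Continuous fun s => evolve A s X :=
  ((continuous_U A).mul continuous_const).mul ((continuous_U A).comp continuous_neg)

theorem transpose_evolve {A : Matrix (Fin n) (Fin n) ℂ} (hA : Aᵀ = A) (s : ℝ)
    (X : Matrix (Fin n) (Fin n) ℂ) : (evolve A s X)ᵀ = evolve A (-s) Xᵀ := by
  rw [evolve, evolve, transpose_mul, transpose_mul, transpose_U hA, transpose_U hA, neg_neg,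
    Matrix.mul_assoc]

noncomputable def periods (X : Matrix (Fin n) (Fin n) ℂ) : AddSubgroup ℝ where
  carrier := {s | evolve A s X = X}
  zero_mem' := evolve_zero A X
  add_mem' {s t} (hs : evolve A s X = X) (ht : evolve A t X = X) := by
    rw [Set.mem_ofPred_eq, evolve_add, ht, hs]
  neg_mem' {s} (hs : evolve A s X = X) := by
    rw [Set.mem_ofPred_eq]
    conv_lhs => rw [← hs]
    exact evolve_neg_evolve A s X

theorem mem_periods {X : Matrix (Fin n) (Fin n) ℂ} {s : ℝ} :
    s ∈ periods A X ↔ evolve A s X = X := Iff.rfl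

theorem isClosed_periods (X : Matrix (Fin n) (Fin n) ℂ) : IsClosed (periods A X : Set ℝ) :=
  isClosed_eq (continuous_evolve A X) continuous_const

/-- Transposition reverses time, so transfer `P → Q` at time `t` also gives `Q → P` at time `t`. -/
theorem two_mul_mem_periods_of_evolve_eq {A P Q : Matrix (Fin n) (Fin n) ℂ} (hA : Aᵀ = A)
    (hP : Pᵀ = P) (hQ : Qᵀ = Q) {t : ℝ} (hpst : evolve A t P = Q) : 2 * t ∈ periods A P := by
  have hback : evolve A (-t) P = Q := by
    rw [← hP, ← transpose_evolve hA, hpst, hQ]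
  rw [mem_periods, two_mul, evolve_add, hpst, ← hback, ← evolve_add, add_neg_cancel, evolve_zero]

end Evolution

theorem Matrix.IsHermitian.transpose_eq_self_of_im_eq_zero {m : Type*}
    {X : Matrix m m ℂ} (hX : X.IsHermitian) (hreal : ∀ i j, (X i j).im = 0) : Xᵀ = X := by
  ext i j
  rw [transpose_apply, ← hX.apply i j]
  exact (Complex.conj_eq_iff_im.2 (hreal j i)).symm

theorem stmt_10_general {n : ℕ}
    (A : Matrix (Fin n) (Fin n) ℂ)
    (hAsym : Aᵀ = A)
    (P Q : Matrix (Fin n) (Fin n) ℂ)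
    (hP : P.PosSemidef) (hPreal : ∀ i j, (P i j).im = 0)
    (hQ : Q.PosSemidef) (hQreal : ∀ i j, (Q i j).im = 0)
    (hPQ : P ≠ Q)
    (t : ℝ) (hpst : U A t * P * U A (-t) = Q) :
    ∃ σ : ℝ, IsLeast {s : ℝ | 0 < s ∧ U A s * P * U A (-s) = P} σ ∧
      U A (σ / 2) * P * U A (-(σ / 2)) = Q := by
  change evolve A t P = Q at hpst
  have ht : t ∉ periods A P := fun h => hPQ (h.symm.trans hpst)
  have h2t := two_mul_mem_periods_of_evolve_eq hAsym
    (hP.isHermitian.transpose_eq_self_of_im_eq_zero hPreal)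
    (hQ.isHermitian.transpose_eq_self_of_im_eq_zero hQreal) hpst
  have hbot : periods A P ≠ ⊥ := fun h => ht (by simpa [h] using h2t)
  have htop : periods A P ≠ ⊤ := fun h => ht (h ▸ AddSubgroup.mem_top t)
  obtain ⟨σ, hσ⟩ := AddSubgroup.exists_isLeast_pos_of_isClosed (isClosed_periods A P) hbot htop
  have hset : {s : ℝ | 0 < s ∧ U A s * P * U A (-s) = P} = {g | g ∈ periods A P ∧ 0 < g} :=
    Set.ext fun _ => and_comm
  refine ⟨σ, hset ▸ hσ, ?_⟩
  have hshift := (mem_periods A).1 (AddSubgroup.half_sub_mem_of_isLeast hσ ht h2t)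
  have hhalf : σ / 2 = t + (σ / 2 - t) := by ring
  change evolve A (σ / 2) P = Q
  rw [hhalf, evolve_add, hshift, hpst]

/-- If `A` is real symmetric, `P ≠ Q` are real density matrices,
and there is perfect state transfer from `P` to `Q` at some time `t > 0`, then
the set of positive periods of `P` has a least element `σ`, and perfect state
transfer from `P` to `Q` occurs at time `σ/2`. -/
theorem stmt_10 {n : ℕ} (hn : 1 ≤ n)
    (A : Matrix (Fin n) (Fin n) ℂ)
    (hAreal : ∀ i j, (A i j).im = 0) (hAsym : Aᵀ = A)
    (P Q : Matrix (Fin n) (Fin n) ℂ)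
    (hP : P.PosSemidef) (hPtr : P.trace = 1) (hPreal : ∀ i j, (P i j).im = 0)
    (hQ : Q.PosSemidef) (hQtr : Q.trace = 1) (hQreal : ∀ i j, (Q i j).im = 0)
    (hPQ : P ≠ Q)
    (t : ℝ) (ht : 0 < t) (hpst : U A t * P * U A (-t) = Q) :
    ∃ σ : ℝ, IsLeast {s : ℝ | 0 < s ∧ U A s * P * U A (-s) = P} σ ∧
      U A (σ / 2) * P * U A (-(σ / 2)) = Q :=
  stmt_10_general A hAsym P Q hP hPreal hQ hQreal hPQ t hpst
end

section
/- Let A be a Hermitian n×n matrix with spectral decomposition given by distinct real eigenvalues θ_1,…,θ_m (m ≥ 2) and idempotents E_1,…,E_m, and write θ_max and θ_min for the largest and smallest eigenvalues. Let P and Q be density matrices with tr(P·Q) = 0, and suppose there is perfect state transfer from P to Q at time t > 0, i.e. U(t)·P·U(−t) = Q. Then t·(θ_max − θ_min) ≥ π. -/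
/-!
Write `P = Bᴴ B`. Orthogonality of `P` and `Q = U P U*` says that
`tr ((B U Bᴴ)(B U Bᴴ)ᴴ) = tr (Q P) = 0`, so `B U Bᴴ = 0` and in particular `tr (U P) = 0`.
Expanding `U = ∑ e^{itθ_r} E_r` gives `∑ e^{itθ_r} tr (E_r P) = 0` with weights
`tr (E_r P) ≥ 0` summing to `1`. If all phases `tθ_r` lay in an interval shorter than `π`,
rotating by its midpoint would make every term have positive real part.
-/

open Matrix
open scoped ComplexOrder

theorem exp_mul_eq_of_mul_eq_smul {𝔸 : Type*} [NormedRing 𝔸] [NormedAlgebra ℂ 𝔸]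
    [CompleteSpace 𝔸] {M E : 𝔸} {c : ℂ} (h : M * E = c • E) :
    NormedSpace.exp M * E = Complex.exp c • E := by
  have hpow : ∀ k : ℕ, M ^ k * E = c ^ k • E := by
    intro k
    induction k with
    | zero => simp
    | succ k ih => rw [pow_succ', mul_assoc, ih, mul_smul_comm, h, smul_smul, pow_succ]
  have hM := (NormedSpace.exp_series_hasSum_exp' (𝕂 := ℂ) M).mul_right E
  have hc := (NormedSpace.exp_series_hasSum_exp' (𝕂 := ℂ) c).smul_const E
  rw [← Complex.exp_eq_exp_ℂ] at hc
  refine hM.unique (hc.congr_fun fun k => ?_)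
  simp only [smul_mul_assoc, hpow, smul_smul, smul_eq_mul]

section OrthogonalIdempotents

variable {ι : Type*} [Fintype ι] [DecidableEq ι]

theorem sum_smul_mul_eq_smul_of_orthogonal {R 𝔸 : Type*} [Semiring R] [Semiring 𝔸]
    [Module R 𝔸] [IsScalarTower R 𝔸 𝔸] {E : ι → 𝔸}
    (hE : ∀ r s, E r * E s = if r = s then E r else 0) (c : ι → R) (r : ι) :
    (∑ s, c s • E s) * E r = c r • E r := by
  simp only [Finset.sum_mul, smul_mul_assoc, hE, smul_ite, smul_zero, Finset.sum_ite_eq',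
    Finset.mem_univ, if_true]

theorem U_sum_smul_eq_sum_exp_smul {n : ℕ} {E : ι → Matrix (Fin n) (Fin n) ℂ}
    (hEmul : ∀ r s, E r * E s = if r = s then E r else 0) (hEsum : ∑ r, E r = 1)
    (θ : ι → ℝ) (t : ℝ) :
    U (∑ r, (θ r : ℂ) • E r) t = ∑ r, Complex.exp (t * θ r * Complex.I) • E r := by
  rw [← mul_one (U _ t), ← hEsum, Finset.mul_sum]
  refine Finset.sum_congr rfl fun r _ => ?_
  -- `exp` depends only on the topology, so any normed algebra structure on matrices will do.
  open scoped Matrix.Norms.Operator in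
  refine exp_mul_eq_of_mul_eq_smul ?_
  rw [smul_mul_assoc, sum_smul_mul_eq_smul_of_orthogonal hEmul, smul_smul]
  ring_nf

end OrthogonalIdempotents

theorem conjTranspose_U {n : ℕ} {A : Matrix (Fin n) (Fin n) ℂ} (hA : A.IsHermitian) (t : ℝ) :
    (U A t)ᴴ = U A (-t) := by
  rw [U, U, ← exp_conjTranspose, conjTranspose_smul, hA.eq]
  congr 2
  simp [Complex.conj_ofReal]

open scoped MatrixOrder in
theorem Matrix.PosSemidef.trace_mul_eq_zero_of_trace_conj_mul_eq_zero {n : Type*} [Fintype n]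
    [DecidableEq n] {P : Matrix n n ℂ} (hP : P.PosSemidef) {V : Matrix n n ℂ}
    (h : (V * P * Vᴴ * P).trace = 0) : (V * P).trace = 0 := by
  obtain ⟨B, rfl⟩ := CStarAlgebra.nonneg_iff_eq_star_mul_self.mp hP.nonneg
  rw [star_eq_conjTranspose] at h ⊢
  have hN : B * V * Bᴴ = 0 := by
    rw [← trace_mul_conjTranspose_self_eq_zero_iff, ← h]
    simp only [conjTranspose_mul, conjTranspose_conjTranspose, Matrix.mul_assoc]
    rw [trace_mul_comm B]
    simp only [Matrix.mul_assoc]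
  rw [← Matrix.mul_assoc, trace_mul_comm, ← Matrix.mul_assoc, hN, trace_zero]

theorem Matrix.PosSemidef.trace_idempotent_mul_nonneg {n : Type*} [Fintype n]
    {P E : Matrix n n ℂ} (hP : P.PosSemidef) (hE : E.IsHermitian) (hEE : E * E = E) :
    0 ≤ (E * P).trace := by
  have := (hP.conjTranspose_mul_mul_same E).trace_nonneg
  rwa [hE.eq, trace_mul_comm, ← Matrix.mul_assoc, hEE] at this

theorem sum_mul_exp_mul_I_ne_zero_of_sub_lt_pi {ι : Type*} [Fintype ι] {w : ι → ℂ}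
    (hw : ∀ i, 0 ≤ w i) (hsum : ∑ i, w i ≠ 0)
    {x : ι → ℝ} {a b : ℝ} (hx : ∀ i, x i ∈ Set.Icc a b) (hab : b - a < Real.pi) :
    ∑ i, w i * Complex.exp (x i * Complex.I) ≠ 0 := by
  set φ := (a + b) / 2 with hφ
  have hcos : ∀ i, 0 < Real.cos (x i - φ) := fun i => by
    apply Real.cos_pos_of_mem_Ioo
    constructor <;> linarith [(hx i).1, (hx i).2]
  have hre : (Complex.exp (-φ * Complex.I) * ∑ i, w i * Complex.exp (x i * Complex.I)).re
      = ∑ i, (w i).re * Real.cos (x i - φ) := by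
    rw [Finset.mul_sum, Complex.re_sum]
    refine Finset.sum_congr rfl fun i _ => ?_
    rw [Complex.eq_re_of_ofReal_le (hw i), mul_left_comm, ← Complex.exp_add, ← add_mul,
      ← Complex.ofReal_neg, ← Complex.ofReal_add, Complex.re_ofReal_mul,
      Complex.exp_ofReal_mul_I_re, Complex.ofReal_re, neg_add_eq_sub]
  obtain ⟨j, -, hj⟩ := Finset.exists_ne_zero_of_sum_ne_zero hsum
  have hpos : 0 < ∑ i, (w i).re * Real.cos (x i - φ) := by
    refine Finset.sum_pos' (fun i _ => mul_nonneg (Complex.nonneg_iff.1 (hw i)).1 (hcos i).le)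
      ⟨j, Finset.mem_univ j, mul_pos ?_ (hcos j)⟩
    exact (Complex.pos_iff.1 ((hw j).lt_of_ne hj.symm)).1
  intro h
  rw [h, mul_zero, Complex.zero_re] at hre
  linarith

theorem stmt_12_general {n m : ℕ}
    (A : Matrix (Fin n) (Fin n) ℂ) (hA : A.IsHermitian)
    (θ : Fin m → ℝ)
    (E : Fin m → Matrix (Fin n) (Fin n) ℂ)
    (hEherm : ∀ r, (E r).IsHermitian)
    (hEmul : ∀ r s : Fin m, E r * E s = if r = s then E r else 0)
    (hEsum : ∑ r, E r = 1)
    (hspec : A = ∑ r, (θ r : ℂ) • E r)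
    (rmax rmin : Fin m)
    (hmax : ∀ r, θ r ≤ θ rmax) (hmin : ∀ r, θ rmin ≤ θ r)
    (P Q : Matrix (Fin n) (Fin n) ℂ)
    (hP : P.PosSemidef) (hPtr : P.trace = 1)
    (horth : (P * Q).trace = 0)
    (t : ℝ) (ht : 0 < t) (hpst : U A t * P * U A (-t) = Q) :
    Real.pi ≤ t * (θ rmax - θ rmin) := by
  have hUt : U A t = ∑ r, Complex.exp (t * θ r * Complex.I) • E r :=
    hspec ▸ U_sum_smul_eq_sum_exp_smul hEmul hEsum θ t
  have htrace : (U A t * P).trace = 0 := by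
    refine hP.trace_mul_eq_zero_of_trace_conj_mul_eq_zero ?_
    rw [conjTranspose_U hA, hpst, trace_mul_comm, horth]
  have hphases : ∑ r, (E r * P).trace * Complex.exp ((t * θ r : ℝ) * Complex.I) = 0 := by
    rw [← htrace, hUt, Finset.sum_mul, trace_sum]
    refine Finset.sum_congr rfl fun r _ => ?_
    rw [smul_mul_assoc, trace_smul, smul_eq_mul, mul_comm, Complex.ofReal_mul]
  have hweights : ∑ r, (E r * P).trace = 1 := by
    rw [← trace_sum, ← Finset.sum_mul, hEsum, Matrix.one_mul, hPtr]
  by_contra! hlt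
  refine sum_mul_exp_mul_I_ne_zero_of_sub_lt_pi
    (fun r => hP.trace_idempotent_mul_nonneg (hEherm r) (by simpa using hEmul r r))
    (hweights ▸ one_ne_zero)
    (fun r => ⟨mul_le_mul_of_nonneg_left (hmin r) ht.le,
      mul_le_mul_of_nonneg_left (hmax r) ht.le⟩)
    (by rwa [← mul_sub]) hphases

/-- If `A` is Hermitian with spectral decomposition
`A = ∑ θ_r • E_r` (with `m ≥ 2` distinct eigenvalues, largest `θ rmax` and
smallest `θ rmin`), `P` and `Q` are density matrices with `tr(P·Q) = 0`, and
there is perfect state transfer from `P` to `Q` at time `t > 0`, then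
`t·(θ_max − θ_min) ≥ π`. -/
theorem stmt_12 {n m : ℕ} (hn : 1 ≤ n) (hm : 2 ≤ m)
    (A : Matrix (Fin n) (Fin n) ℂ) (hA : A.IsHermitian)
    (θ : Fin m → ℝ) (hθ : Function.Injective θ)
    (E : Fin m → Matrix (Fin n) (Fin n) ℂ)
    (hE0 : ∀ r, E r ≠ 0)
    (hEherm : ∀ r, (E r).IsHermitian)
    (hEmul : ∀ r s : Fin m, E r * E s = if r = s then E r else 0)
    (hEsum : ∑ r, E r = 1)
    (hspec : A = ∑ r, (θ r : ℂ) • E r)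
    (rmax rmin : Fin m)
    (hmax : ∀ r, θ r ≤ θ rmax) (hmin : ∀ r, θ rmin ≤ θ r)
    (P Q : Matrix (Fin n) (Fin n) ℂ)
    (hP : P.PosSemidef) (hPtr : P.trace = 1)
    (hQ : Q.PosSemidef) (hQtr : Q.trace = 1)
    (horth : (P * Q).trace = 0)
    (t : ℝ) (ht : 0 < t) (hpst : U A t * P * U A (-t) = Q) :
    Real.pi ≤ t * (θ rmax - θ rmin) :=
  stmt_12_general A hA θ E hEherm hEmul hEsum hspec rmax rmin hmax hmin P Q hP hPtr horth t ht hpst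
end

section
/- Let A be a symmetric n×n matrix with integer entries, with spectral decomposition given by distinct real eigenvalues θ_1,…,θ_m and idempotents E_1,…,E_m, and let P be a density matrix all of whose entries are rational. If the eigenvalue support of P satisfies the ratio condition, then there is a squarefree positive integer Δ such that for every pair (r,s) with E_r·P·E_s ≠ 0 there is an integer k with θ_r − θ_s = k·√Δ. -/
/-!
The eigenvalues `θ r` are algebraic integers, being eigenvalues of an integer matrix. With
`M r s = E r * P * E s`, the iterated commutators `ad_A^p P = ∑ (θ r - θ s)^p • M r s` are rational
matrices, so the moments `∑ w r s * (θ r - θ s)^p` are rational, where the weights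
`w r s = tr (M r s * P) = ‖M r s‖²` are positive exactly on the eigenvalue support. A positive
measure with finitely many atoms and rational moments has its atoms among the roots of a rational
polynomial (its Hankel matrix is invertible), so the sum of the distinct values `(θ r - θ s)^2` over
the support is rational. By the ratio condition this sum is a positive rational multiple of `δ^2`
for a nonzero difference `δ`; hence `δ^2` is a rational algebraic integer, i.e. a positive integer
`b^2 * Δ` with `Δ` squarefree, and every difference, a rational multiple of `b * √Δ` with integral
square, is an integer multiple of `√Δ`.
-/

open Matrix Polynomial
open scoped ComplexOrder

section LinearSystem

variable {K L n : Type*} [Field K] [Field L] [Algebra K L] [Fintype n] [DecidableEq n]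

theorem Matrix.eq_algebraMap_comp_of_map_mulVec_eq {H : Matrix n n K} (hH : H.det ≠ 0)
    {b : n → K} {c : n → L} (hc : H.map (algebraMap K L) *ᵥ c = algebraMap K L ∘ b) :
    c = algebraMap K L ∘ (H⁻¹ *ᵥ b) := by
  have hdet : (H.map (algebraMap K L)).det ≠ 0 := by
    simpa only [RingHom.map_det, RingHom.mapMatrix_apply] using
      (_root_.map_ne_zero (algebraMap K L)).mpr hH
  apply mulVec_injective_of_det_ne_zero hdet
  ext i
  rw [hc, ← RingHom.map_mulVec, mulVec_mulVec, mul_nonsing_inv _ (isUnit_iff_ne_zero.mpr hH),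
    one_mulVec, Function.comp_apply]

end LinearSystem

theorem Polynomial.Monic.eval_eq_sum_fin_add_pow {R : Type*} [CommSemiring R] {g : R[X]}
    {T : ℕ} (hg : g.Monic) (hT : g.natDegree = T) (x : R) :
    g.eval x = ∑ j : Fin T, g.coeff j * x ^ (j : ℕ) + x ^ T := by
  subst hT
  conv_lhs => rw [hg.as_sum]
  simp [eval_finsetSum, Fin.sum_univ_eq_sum_range (fun j => g.coeff j * x ^ j), add_comm]

section Moments

variable {K L : Type*} [Field K] [Field L] [Algebra K L]

/-- The monic polynomial vanishing at the `u k` yields a solution of the Hankel system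
`∑ j, H i j * c j = -s (i + T)` with `H i j = s (i + j)`, where `s p` is the `p`-th moment.
As `H = Vᵀ (diag W) V` is invertible with entries in `K`, that solution lies in `K`. -/
theorem Polynomial.coeff_prod_X_sub_C_mem_bot_of_moments {T : ℕ} {u W : Fin T → L}
    (hu : Function.Injective u) (hW : ∀ k, W k ≠ 0)
    (hmom : ∀ p : ℕ, ∑ k, W k * u k ^ p ∈ (⊥ : Subalgebra K L)) (j : Fin T) :
    (∏ k, (X - C (u k))).coeff j ∈ (⊥ : Subalgebra K L) := by
  choose s hs using fun p => Algebra.mem_bot.mp (hmom p)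
  set g : L[X] := ∏ k, (X - C (u k))
  have hmonic : g.Monic := monic_prod_of_monic _ _ fun k _ => monic_X_sub_C (u k)
  have hdeg : g.natDegree = T := by simp [g]
  set H : Matrix (Fin T) (Fin T) K := .of fun i j => s (i + j)
  have hH : H.map (algebraMap K L) = (vandermonde u)ᵀ * diagonal W * vandermonde u := by
    ext i j
    rw [mul_apply]
    simp only [H, map_apply, of_apply, hs, mul_diagonal, transpose_apply, vandermonde_apply,
      pow_add]
    exact Finset.sum_congr rfl fun k _ => by ring
  have hHdet : H.det ≠ 0 := by
    have : (H.map (algebraMap K L)).det ≠ 0 := by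
      rw [hH, det_mul, det_mul, det_transpose, det_diagonal]
      have hV : (vandermonde u).det ≠ 0 := det_vandermonde_ne_zero_iff.mpr hu
      exact mul_ne_zero (mul_ne_zero hV (Finset.prod_ne_zero_iff.mpr fun k _ => hW k)) hV
    rw [← RingHom.mapMatrix_apply, ← RingHom.map_det] at this
    exact fun h => this (by rw [h, map_zero])
  have hroot : ∀ k, ∑ j : Fin T, g.coeff j * u k ^ (j : ℕ) = -u k ^ T := by
    intro k
    have h := hmonic.eval_eq_sum_fin_add_pow hdeg (u k)
    rw [show g.eval (u k) = 0 by simp [g, eval_prod, Finset.prod_eq_zero_iff, sub_eq_zero]] at h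
    exact eq_neg_of_add_eq_zero_left h.symm
  have hsys : H.map (algebraMap K L) *ᵥ (fun j => g.coeff j) =
      algebraMap K L ∘ fun i : Fin T => -s (i + T) := by
    have hVc : vandermonde u *ᵥ (fun j => g.coeff j) = fun k => -u k ^ T := by
      ext k
      simp only [mulVec, dotProduct, vandermonde_apply, ← hroot k, mul_comm]
    ext i
    have hDVc : diagonal W *ᵥ (fun k => -u k ^ T) = fun k => -(W k * u k ^ T) := by
      ext k
      rw [mulVec_diagonal, mul_neg]
    rw [hH, ← mulVec_mulVec, ← mulVec_mulVec, hVc, hDVc]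
    simp only [mulVec, dotProduct, transpose_apply, vandermonde_apply, Function.comp_apply,
      map_neg, hs, pow_add, ← Finset.sum_neg_distrib]
    exact Finset.sum_congr rfl fun k _ => by ring
  rw [congrFun (eq_algebraMap_comp_of_map_mulVec_eq hHdet hsys) j]
  exact Subalgebra.algebraMap_mem _ _

theorem Finset.sum_image_mem_bot_of_moments [PartialOrder L] [IsStrictOrderedRing L]
    [DecidableEq L] {ι : Type*} (s : Finset ι) {x w : ι → L} (hw : ∀ i ∈ s, 0 < w i)
    (hmom : ∀ p : ℕ, ∑ i ∈ s, w i * x i ^ p ∈ (⊥ : Subalgebra K L)) :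
    ∑ y ∈ s.image x, y ∈ (⊥ : Subalgebra K L) := by
  set U := s.image x
  set u : Fin U.card → L := fun k => U.equivFin.symm k
  have hsum_u (f : L → L) : ∑ k, f (u k) = ∑ y ∈ U, f y := by
    rw [← Finset.sum_coe_sort U]
    exact U.equivFin.symm.sum_comp fun y => f y
  set W : Fin U.card → L := fun k => ∑ i ∈ s with x i = u k, w i
  have hW (k : Fin U.card) : W k ≠ 0 := by
    obtain ⟨i, hi, hxi⟩ := Finset.mem_image.mp (U.equivFin.symm k).2
    exact (Finset.sum_pos (fun j hj => hw j (Finset.mem_filter.mp hj).1)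
      ⟨i, Finset.mem_filter.mpr ⟨hi, hxi⟩⟩).ne'
  have hmomW (p : ℕ) : ∑ k, W k * u k ^ p ∈ (⊥ : Subalgebra K L) := by
    have hfiber : ∑ y ∈ U, (∑ i ∈ s with x i = y, w i) * y ^ p = ∑ i ∈ s, w i * x i ^ p := by
      rw [← Finset.sum_fiberwise_of_maps_to (fun i hi => Finset.mem_image_of_mem x hi)]
      refine Finset.sum_congr rfl fun y _ => ?_
      rw [Finset.sum_mul]
      exact Finset.sum_congr rfl fun i hi => by rw [(Finset.mem_filter.mp hi).2]
    rw [show ∑ k, W k * u k ^ p = ∑ i ∈ s, w i * x i ^ p from (hsum_u _).trans hfiber]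
    exact hmom p
  have hcoeff := Polynomial.coeff_prod_X_sub_C_mem_bot_of_moments (K := K) (u := u)
    (Subtype.val_injective.comp U.equivFin.symm.injective) hW hmomW
  have hdeg : (∏ k, (X - C (u k))).natDegree = U.card := by simp
  rw [← hsum_u fun y => y, ← neg_neg (∑ k, u k), ← prod_X_sub_C_nextCoeff]
  refine Subalgebra.neg_mem _ ?_
  rcases Nat.eq_zero_or_pos U.card with h0 | hpos
  · simp [nextCoeff, hdeg, h0]
  · rw [nextCoeff_of_natDegree_pos (hdeg.symm ▸ hpos), hdeg]
    exact hcoeff ⟨U.card - 1, Nat.sub_lt hpos one_pos⟩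

end Moments

section Spectral

variable {ι R S : Type*} [Fintype ι] [CommRing S] [Ring R] [Algebra S R] {E : ι → R}

theorem OrthogonalIdempotents.sum_smul_mul (he : OrthogonalIdempotents E) (θ : ι → S) (r : ι) :
    (∑ s, θ s • E s) * E r = θ r • E r := by
  classical
  simp [Finset.sum_mul, he.mul_eq]

theorem OrthogonalIdempotents.mul_sum_smul (he : OrthogonalIdempotents E) (θ : ι → S) (r : ι) :
    E r * (∑ s, θ s • E s) = θ r • E r := by
  classical
  simp [Finset.mul_sum, he.mul_eq]

theorem CompleteOrthogonalIdempotents.iterate_commutator_eq_sum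
    (he : CompleteOrthogonalIdempotents E) (θ : ι → S) (P : R) (p : ℕ) :
    (fun X => (∑ r, θ r • E r) * X - X * ∑ r, θ r • E r)^[p] P =
      ∑ r, ∑ s, (θ r - θ s) ^ p • (E r * P * E s) := by
  induction p with
  | zero =>
    simp only [Function.iterate_zero, id, pow_zero, one_smul, ← Finset.mul_sum, ← Finset.sum_mul,
      he.complete, mul_one, one_mul]
  | succ p ih =>
    rw [Function.iterate_succ_apply', ih, Finset.mul_sum, Finset.sum_mul, ← Finset.sum_sub_distrib]
    refine Finset.sum_congr rfl fun r _ => ?_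
    rw [Finset.mul_sum, Finset.sum_mul, ← Finset.sum_sub_distrib]
    refine Finset.sum_congr rfl fun s _ => ?_
    have hleft : (∑ r, θ r • E r) * (E r * P * E s) = θ r • (E r * P * E s) := by
      rw [← mul_assoc, ← mul_assoc, he.sum_smul_mul, smul_mul_assoc, smul_mul_assoc]
    have hright : E r * P * E s * (∑ r, θ r • E r) = θ s • (E r * P * E s) := by
      rw [mul_assoc, he.mul_sum_smul, mul_smul_comm]
    rw [mul_smul_comm, smul_mul_assoc, hleft, hright, smul_smul, smul_smul, ← sub_smul, pow_succ,
      mul_sub]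

end Spectral

section Trace

variable {n R : Type*} [Fintype n] [CommRing R] [StarRing R] {E F P : Matrix n n R}

theorem Matrix.trace_mul_mul_mul_eq_trace_mul_conjTranspose (hE : E.IsHermitian)
    (hE' : IsIdempotentElem E) (hF : F.IsHermitian) (hF' : IsIdempotentElem F)
    (hP : P.IsHermitian) : trace (E * P * F * P) = trace (E * P * F * (E * P * F)ᴴ) := by
  simp only [conjTranspose_mul, hE.eq, hF.eq, hP.eq]
  calc trace (E * P * F * P) = trace ((E * E) * P * F * P) := by rw [hE'.eq]
    _ = trace (E * (E * P * F * P)) := by simp only [mul_assoc]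
    _ = trace ((E * P * F * P) * E) := trace_mul_comm _ _
    _ = trace (E * P * (F * F) * P * E) := by rw [hF'.eq]
    _ = _ := by simp only [mul_assoc]

variable [PartialOrder R] [StarOrderedRing R]

theorem Matrix.trace_mul_mul_mul_nonneg (hE : E.IsHermitian) (hE' : IsIdempotentElem E)
    (hF : F.IsHermitian) (hF' : IsIdempotentElem F) (hP : P.IsHermitian) :
    0 ≤ trace (E * P * F * P) := by
  rw [trace_mul_mul_mul_eq_trace_mul_conjTranspose hE hE' hF hF' hP]
  exact (posSemidef_self_mul_conjTranspose _).trace_nonneg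

theorem Matrix.trace_mul_mul_mul_pos [NoZeroDivisors R] (hE : E.IsHermitian)
    (hE' : IsIdempotentElem E) (hF : F.IsHermitian) (hF' : IsIdempotentElem F)
    (hP : P.IsHermitian) (hEPF : E * P * F ≠ 0) : 0 < trace (E * P * F * P) := by
  refine (trace_mul_mul_mul_nonneg hE hE' hF hF' hP).lt_of_ne' ?_
  rwa [trace_mul_mul_mul_eq_trace_mul_conjTranspose hE hE' hF hF' hP, Ne,
    trace_mul_conjTranspose_self_eq_zero_iff]

end Trace

theorem CompleteOrthogonalIdempotents.trace_iterate_commutator_mul {ι n S : Type*} [Fintype ι]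
    [Fintype n] [DecidableEq n] [CommRing S] {E : ι → Matrix n n S}
    (he : CompleteOrthogonalIdempotents E) (θ : ι → S) (P : Matrix n n S) (p : ℕ) :
    trace ((fun X => (∑ r, θ r • E r) * X - X * ∑ r, θ r • E r)^[p] P * P) =
      ∑ r, ∑ s, (θ r - θ s) ^ p * trace (E r * P * E s * P) := by
  rw [he.iterate_commutator_eq_sum]
  simp only [Finset.sum_mul, trace_sum, smul_mul_assoc, trace_smul, smul_eq_mul]

theorem Complex.ofReal_mem_bot_iff {x : ℝ} :
    (x : ℂ) ∈ (⊥ : Subalgebra ℚ ℂ) ↔ x ∈ (⊥ : Subalgebra ℚ ℝ) := by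
  simp only [Algebra.mem_bot, Set.mem_range, eq_ratCast, ← Complex.ofReal_ratCast,
    Complex.ofReal_inj]

theorem mem_bot_matrix_iff {n L : Type*} [Fintype n] [DecidableEq n] [Field L] [CharZero L]
    {M : Matrix n n L} : M ∈ (⊥ : Subalgebra ℚ L).matrix ↔ ∀ i j, ∃ q : ℚ, M i j = q := by
  change (∀ i j, M i j ∈ (⊥ : Subalgebra ℚ L)) ↔ _
  simp only [Algebra.mem_bot, Set.mem_range, eq_ratCast, eq_comm]

theorem sum_re_trace_mul_sub_sq_pow_mem_bot {ι n : Type*} [Fintype ι] [Fintype n]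
    [DecidableEq n] {A P : Matrix n n ℂ} {E : ι → Matrix n n ℂ} {θ : ι → ℝ}
    (hA : A ∈ (⊥ : Subalgebra ℚ ℂ).matrix) (hP : P ∈ (⊥ : Subalgebra ℚ ℂ).matrix)
    (hPherm : P.IsHermitian) (hE : CompleteOrthogonalIdempotents E)
    (hEherm : ∀ r, (E r).IsHermitian) (hspec : A = ∑ r, (θ r : ℂ) • E r) (p : ℕ) :
    ∑ rs : ι × ι, (trace (E rs.1 * P * E rs.2 * P)).re * ((θ rs.1 - θ rs.2) ^ 2) ^ p ∈
      (⊥ : Subalgebra ℚ ℝ) := by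
  have hiter : (fun X => A * X - X * A)^[2 * p] P ∈ (⊥ : Subalgebra ℚ ℂ).matrix := by
    induction 2 * p with
    | zero => exact hP
    | succ k ih =>
      rw [Function.iterate_succ_apply']
      exact sub_mem (mul_mem hA ih) (mul_mem ih hA)
  have htrace : trace ((fun X => A * X - X * A)^[2 * p] P * P) ∈ (⊥ : Subalgebra ℚ ℂ) :=
    Subalgebra.sum_mem _ fun i _ => mul_mem hiter hP i i
  rw [hspec, hE.trace_iterate_commutator_mul] at htrace
  rw [← Complex.ofReal_mem_bot_iff, Fintype.sum_prod_type]
  convert htrace using 1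
  push_cast
  refine Finset.sum_congr rfl fun r _ => Finset.sum_congr rfl fun s _ => ?_
  rw [← Complex.eq_re_of_ofReal_le (r := 0), pow_mul, mul_comm]
  simpa using trace_mul_mul_mul_nonneg (hEherm r) (hE.idem r) (hEherm s) (hE.idem s) hPherm

theorem Matrix.isIntegral_of_map_mul_eq_smul {R K n : Type*} [CommRing R] [Field K] [Algebra R K]
    [Fintype n] [DecidableEq n] (A : Matrix n n R) {B : Matrix n n K} (hB : B ≠ 0) {μ : K}
    (h : A.map (algebraMap R K) * B = μ • B) : IsIntegral R μ := by
  have hμ : μ ∈ spectrum K (A.map (algebraMap R K)) := by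
    rw [spectrum.mem_iff]
    intro hunit
    apply hB
    rw [← hunit.mul_right_eq_zero, sub_mul, h, Algebra.algebraMap_eq_smul_one, smul_mul_assoc,
      one_mul, sub_self]
  rw [mem_spectrum_iff_isRoot_charpoly, charpoly_map, IsRoot, eval_map] at hμ
  exact ⟨A.charpoly, A.charpoly_monic, hμ⟩

theorem OrthogonalIdempotents.isIntegral_of_eq_sum_smul {ι n : Type*} [Fintype ι] [Fintype n]
    [DecidableEq n] {A : Matrix n n ℂ} (hA : ∀ i j, ∃ z : ℤ, A i j = z) {E : ι → Matrix n n ℂ}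
    (hE : OrthogonalIdempotents E) {θ : ι → ℝ} (hspec : A = ∑ r, (θ r : ℂ) • E r) {r : ι}
    (hr : E r ≠ 0) : IsIntegral ℤ (θ r) := by
  choose Aℤ hAℤ using hA
  refine (isIntegral_algebraMap_iff (algebraMap ℝ ℂ).injective).mp
    ((of Aℤ).isIntegral_of_map_mul_eq_smul hr ?_)
  rw [show (of Aℤ).map (algebraMap ℤ ℂ) = A by ext i j; simp [hAℤ], hspec, hE.sum_smul_mul]
  rfl

theorem IsIntegral.exists_int_eq_of_mem_bot {L : Type*} [Field L] [CharZero L] {x : L}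
    (hx : IsIntegral ℤ x) (hbot : x ∈ (⊥ : Subalgebra ℚ L)) : ∃ z : ℤ, x = z := by
  obtain ⟨q, rfl⟩ := Algebra.mem_bot.mp hbot
  rw [isIntegral_algebraMap_iff (algebraMap ℚ L).injective,
    IsIntegrallyClosed.isIntegral_iff] at hx
  obtain ⟨z, rfl⟩ := hx
  exact ⟨z, by simp⟩

theorem Rat.exists_int_eq_of_sq_mul_squarefree {q : ℚ} {Δ : ℕ} (hΔ : Squarefree Δ) {z : ℤ}
    (h : q ^ 2 * Δ = z) : ∃ k : ℤ, q = k := by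
  have hnum : q.num ^ 2 * Δ = z * (q.den : ℤ) ^ 2 := by
    have hq : (q.num : ℚ) = q * q.den := (Rat.mul_den_eq_num q).symm
    exact_mod_cast (by rw [hq, ← h]; ring : (q.num : ℚ) ^ 2 * Δ = z * (q.den : ℚ) ^ 2)
  have hcop : IsCoprime ((q.den : ℤ) ^ 2) (q.num ^ 2) :=
    (Int.isCoprime_iff_gcd_eq_one.mpr (by simpa [Int.gcd] using q.reduced.symm)).pow
  have hdvd : ((q.den * q.den : ℕ) : ℤ) ∣ Δ := by
    rw [Nat.cast_mul, ← sq]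
    exact hcop.dvd_of_dvd_mul_left ⟨z, by rw [hnum, mul_comm]⟩
  have hden : q.den = 1 := Nat.isUnit_iff.mp (hΔ _ (Int.natCast_dvd_natCast.mp hdvd))
  exact ⟨q.num, (Rat.coe_int_num_of_den_eq_one hden).symm⟩

theorem exists_int_mul_sqrt_of_sq_eq_int {x δ : ℝ} {q : ℚ} {b Δ : ℕ} (hΔ : Squarefree Δ)
    (hδ : δ ^ 2 = b ^ 2 * Δ) (hx : x = q * δ) {z : ℤ} (hz : x ^ 2 = z) :
    ∃ k : ℤ, x = k * √Δ := by
  obtain ⟨k, hk⟩ : ∃ k : ℤ, q * b = k := by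
    refine Rat.exists_int_eq_of_sq_mul_squarefree hΔ (z := z) ?_
    have : ((q * b) ^ 2 * Δ : ℝ) = z := by rw [← hz, hx]; linear_combination (-(q : ℝ) ^ 2) * hδ
    exact_mod_cast this
  have hkR : (q : ℝ) * b = k := by exact_mod_cast hk
  have hsqrt : δ ^ 2 = (b * √Δ) ^ 2 := by rw [hδ, mul_pow, Real.sq_sqrt (Nat.cast_nonneg Δ)]
  rcases sq_eq_sq_iff_eq_or_eq_neg.mp hsqrt with h | h
  · exact ⟨k, by rw [hx, h, ← mul_assoc, hkR]⟩
  · exact ⟨-k, by rw [hx, h, Int.cast_neg, ← hkR]; ring⟩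

theorem sq_mem_bot_of_sum_image_sq_mem_bot {ι : Type*} {s : Finset ι} {d : ι → ℝ} {i₀ : ι}
    (hi₀ : i₀ ∈ s) (hd₀ : d i₀ ≠ 0) (hratio : ∀ i ∈ s, ∃ q : ℚ, d i = q * d i₀)
    (hsum : ∑ y ∈ s.image (fun i => d i ^ 2), y ∈ (⊥ : Subalgebra ℚ ℝ)) :
    d i₀ ^ 2 ∈ (⊥ : Subalgebra ℚ ℝ) := by
  obtain ⟨a, ha⟩ : ∃ a : ℚ, a • d i₀ ^ 2 = ∑ y ∈ s.image (fun i => d i ^ 2), y := by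
    refine Submodule.mem_span_singleton.mp (Submodule.sum_mem _ fun y hy => ?_)
    obtain ⟨i, hi, rfl⟩ := Finset.mem_image.mp hy
    obtain ⟨q, hq⟩ := hratio i hi
    exact Submodule.mem_span_singleton.mpr ⟨q ^ 2, by rw [hq, Rat.smul_def]; push_cast; ring⟩
  have hpos : 0 < ∑ y ∈ s.image (fun i => d i ^ 2), y := by
    refine Finset.sum_pos' (fun y hy => ?_) ⟨_, Finset.mem_image_of_mem _ hi₀, by positivity⟩
    obtain ⟨i, -, rfl⟩ := Finset.mem_image.mp hy
    positivity
  have ha₀ : a ≠ 0 := by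
    rintro rfl
    rw [zero_smul] at ha
    exact hpos.ne ha
  rw [show d i₀ ^ 2 = a⁻¹ • ∑ y ∈ s.image (fun i => d i ^ 2), y by
    rw [← ha, smul_smul, inv_mul_cancel₀ ha₀, one_smul]]
  exact Subalgebra.smul_mem _ hsum _

theorem exists_squarefree_forall_eq_int_mul_sqrt {ι : Type*} {s : Finset ι} {d : ι → ℝ}
    (hint : ∀ i ∈ s, IsIntegral ℤ (d i))
    (hratio : ∀ i ∈ s, ∀ j ∈ s, d j ≠ 0 → ∃ q : ℚ, d i = q * d j)
    (hsum : ∑ y ∈ s.image (fun i => d i ^ 2), y ∈ (⊥ : Subalgebra ℚ ℝ)) :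
    ∃ Δ : ℕ, 0 < Δ ∧ Squarefree Δ ∧ ∀ i ∈ s, ∃ k : ℤ, d i = k * √Δ := by
  by_cases hzero : ∀ i ∈ s, d i = 0
  · exact ⟨1, one_pos, squarefree_one, fun i hi => ⟨0, by simp [hzero i hi]⟩⟩
  push Not at hzero
  obtain ⟨i₀, hi₀, hd₀⟩ := hzero
  replace hratio (i : ι) (hi : i ∈ s) := hratio i hi i₀ hi₀ hd₀
  have hd₀sq := sq_mem_bot_of_sum_image_sq_mem_bot hi₀ hd₀ hratio hsum
  have hsq_int (i : ι) (hi : i ∈ s) : ∃ z : ℤ, d i ^ 2 = z := by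
    refine IsIntegral.exists_int_eq_of_mem_bot ((hint i hi).pow 2) ?_
    obtain ⟨q, hq⟩ := hratio i hi
    rw [hq, mul_pow, ← Rat.cast_pow, ← eq_ratCast (algebraMap ℚ ℝ)]
    exact Subalgebra.mul_mem _ (Subalgebra.algebraMap_mem _ _) hd₀sq
  obtain ⟨z₀, hz₀⟩ := hsq_int i₀ hi₀
  have hz₀pos : 0 < z₀ := by
    have : (0 : ℝ) < z₀ := hz₀ ▸ by positivity
    exact_mod_cast this
  lift z₀ to ℕ using hz₀pos.le
  obtain ⟨Δ, b, hΔ, -, hbΔ, hsf⟩ := Nat.sq_mul_squarefree_of_pos (by exact_mod_cast hz₀pos)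
  refine ⟨Δ, hΔ, hsf, fun i hi => ?_⟩
  obtain ⟨q, hq⟩ := hratio i hi
  obtain ⟨z, hz⟩ := hsq_int i hi
  refine exists_int_mul_sqrt_of_sq_eq_int (b := b) hsf ?_ hq hz
  rw [hz₀, ← hbΔ]
  push_cast
  ring

theorem stmt_13_general {n m : ℕ}
    (A : Matrix (Fin n) (Fin n) ℂ)
    (hAint : ∀ i j, ∃ z : ℤ, A i j = (z : ℂ))
    (θ : Fin m → ℝ)
    (E : Fin m → Matrix (Fin n) (Fin n) ℂ)
    (hEherm : ∀ r, (E r).IsHermitian)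
    (hEmul : ∀ r s : Fin m, E r * E s = if r = s then E r else 0)
    (hEsum : ∑ r, E r = 1)
    (hspec : A = ∑ r, (θ r : ℂ) • E r)
    (P : Matrix (Fin n) (Fin n) ℂ)
    (hP : P.PosSemidef)
    (hPrat : ∀ i j, ∃ q : ℚ, P i j = (q : ℂ))
    (hratio : ∀ r s k l : Fin m, E r * P * E s ≠ 0 → E k * P * E l ≠ 0 →
      θ k ≠ θ l → ∃ q : ℚ, (θ r - θ s) / (θ k - θ l) = (q : ℝ)) :
    ∃ Δ : ℕ, 0 < Δ ∧ Squarefree Δ ∧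
      ∀ r s : Fin m, E r * P * E s ≠ 0 →
        ∃ k : ℤ, θ r - θ s = (k : ℝ) * Real.sqrt Δ := by
  have hE : CompleteOrthogonalIdempotents E :=
    ⟨OrthogonalIdempotents.iff_mul_eq.mpr hEmul, hEsum⟩
  set supp := Finset.univ.filter fun rs : Fin m × Fin m => E rs.1 * P * E rs.2 ≠ 0
  have hsupp {rs : Fin m × Fin m} : rs ∈ supp ↔ E rs.1 * P * E rs.2 ≠ 0 := by simp [supp]
  set d : Fin m × Fin m → ℝ := fun rs => θ rs.1 - θ rs.2
  have hint (rs) (h : rs ∈ supp) : IsIntegral ℤ (d rs) := by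
    have h' := hsupp.mp h
    exact (hE.isIntegral_of_eq_sum_smul hAint hspec fun h0 => h' (by simp [h0])).sub
      (hE.isIntegral_of_eq_sum_smul hAint hspec fun h0 => h' (by simp [h0]))
  have hrat (rs) (h : rs ∈ supp) (kl) (hkl : kl ∈ supp) (hd : d kl ≠ 0) :
      ∃ q : ℚ, d rs = q * d kl := by
    obtain ⟨q, hq⟩ := hratio _ _ _ _ (hsupp.mp h) (hsupp.mp hkl) (sub_ne_zero.mp hd)
    exact ⟨q, (div_eq_iff hd).mp hq⟩
  have hw (rs) (h : rs ∈ supp) : 0 < (trace (E rs.1 * P * E rs.2 * P)).re :=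
    (Complex.pos_iff.mp (trace_mul_mul_mul_pos (hEherm rs.1) (hE.idem rs.1) (hEherm rs.2)
      (hE.idem rs.2) hP.1 (hsupp.mp h))).1
  have hmom (p : ℕ) : ∑ rs ∈ supp, (trace (E rs.1 * P * E rs.2 * P)).re * (d rs ^ 2) ^ p ∈
      (⊥ : Subalgebra ℚ ℝ) := by
    rw [show supp = Finset.univ.filter _ from rfl,
      Finset.sum_filter_of_ne (p := fun rs : Fin m × Fin m => E rs.1 * P * E rs.2 ≠ 0)
        fun rs _ hne h0 => hne (by simp [h0])]
    refine sum_re_trace_mul_sub_sq_pow_mem_bot (mem_bot_matrix_iff.mpr fun i j => ?_)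
      (mem_bot_matrix_iff.mpr hPrat) hP.1 hE hEherm hspec p
    obtain ⟨z, hz⟩ := hAint i j
    exact ⟨z, by simp [hz]⟩
  obtain ⟨Δ, hΔ, hsf, hk⟩ := exists_squarefree_forall_eq_int_mul_sqrt hint hrat
    (supp.sum_image_mem_bot_of_moments hw hmom)
  exact ⟨Δ, hΔ, hsf, fun r s h => hk (r, s) (hsupp.mpr h)⟩

/-- Let `A` be a symmetric integer matrix with spectral
decomposition `A = ∑ θ_r • E_r` and let `P` be a rational density matrix whose
eigenvalue support satisfies the ratio condition. Then there is a squarefree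
positive integer `Δ` such that whenever `E_r·P·E_s ≠ 0`, the difference
`θ_r − θ_s` is an integer multiple of `√Δ`. -/
theorem stmt_13 {n m : ℕ} (hn : 1 ≤ n)
    (A : Matrix (Fin n) (Fin n) ℂ)
    (hAint : ∀ i j, ∃ z : ℤ, A i j = (z : ℂ)) (hAsym : Aᵀ = A)
    (θ : Fin m → ℝ) (hθ : Function.Injective θ)
    (E : Fin m → Matrix (Fin n) (Fin n) ℂ)
    (hE0 : ∀ r, E r ≠ 0)
    (hEherm : ∀ r, (E r).IsHermitian)
    (hEmul : ∀ r s : Fin m, E r * E s = if r = s then E r else 0)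
    (hEsum : ∑ r, E r = 1)
    (hspec : A = ∑ r, (θ r : ℂ) • E r)
    (P : Matrix (Fin n) (Fin n) ℂ)
    (hP : P.PosSemidef) (hPtr : P.trace = 1)
    (hPrat : ∀ i j, ∃ q : ℚ, P i j = (q : ℂ))
    (hratio : ∀ r s k l : Fin m, E r * P * E s ≠ 0 → E k * P * E l ≠ 0 →
      θ k ≠ θ l → ∃ q : ℚ, (θ r - θ s) / (θ k - θ l) = (q : ℝ)) :
    ∃ Δ : ℕ, 0 < Δ ∧ Squarefree Δ ∧
      ∀ r s : Fin m, E r * P * E s ≠ 0 →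
        ∃ k : ℤ, θ r - θ s = (k : ℝ) * Real.sqrt Δ :=
  stmt_13_general A hAint θ E hEherm hEmul hEsum hspec P hP hPrat hratio
end

section
/- Let X be a connected simple graph on a finite nonempty vertex set with adjacency matrix A (over ℝ), with spectral decomposition given by distinct real eigenvalues θ_1,…,θ_m and idempotents E_1,…,E_m. Then for every pair of vertices a and b, the graph distance satisfies dist(a,b) + 1 ≤ |{r : E_r·e_a ≠ 0}|; in particular the eccentricity of a is strictly less than the size of the eigenvalue support of a. (The proof shows the vectors (A+I)^j·e_a for j = 0,…,c, where c is the eccentricity of a, are linearly independent and lie in the span of the nonzero vectors E_r·e_a.) -/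
/-!
Put `B = A + I` and `e = e_a`. Since the `E r` are complete orthogonal idempotents,
`B ^ j = ∑ r, (θ r + 1) ^ j • E r`, so every Krylov vector `B ^ j *ᵥ e` lies in the span of the
nonzero vectors `E r *ᵥ e`, whose dimension is at most the size of the eigenvalue support of `a`.
On the other hand `(B ^ j) u a` is a positive combination of the numbers of walks of length
`≤ j` from `u` to `a`, so it vanishes for `j < dist u a` and is positive for `j = dist u a`.
Evaluating at vertices `u_j` with `dist a u_j = j` (taken along a geodesic from `a` to `b`), the
vectors `B ^ j *ᵥ e`, `j ≤ dist a b`, form a triangular system and are linearly independent.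
-/

open Matrix Finset

theorem CompleteOrthogonalIdempotents.pow_sum_smul {R A ι : Type*} [CommSemiring R] [Semiring A]
    [Algebra R A] [Fintype ι] {E : ι → A} (he : CompleteOrthogonalIdempotents E) (c : ι → R)
    (n : ℕ) : (∑ i, c i • E i) ^ n = ∑ i, c i ^ n • E i := by
  classical
  induction n with
  | zero => simp [he.complete]
  | succ n ih =>
    simp only [pow_succ, ih, sum_mul_sum, smul_mul_smul_comm, he.mul_eq, smul_ite, smul_zero,
      sum_ite_eq, mem_univ, if_true]

theorem Submodule.finrank_span_range_le_ncard_ne_zero {K M ι : Type*} [DivisionRing K]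
    [AddCommGroup M] [Module K M] [Finite ι] (f : ι → M) :
    Module.finrank K (span K (Set.range f)) ≤ {i | f i ≠ 0}.ncard := by
  classical
  have : Fintype ι := Fintype.ofFinite ι
  have hrange : Set.range f \ {0} = Set.range (fun i : {i | f i ≠ 0} => f i) := by
    ext x
    simp only [Set.mem_sdiff, Set.mem_range, Set.mem_singleton_iff, Subtype.exists,
      Set.mem_ofPred_eq, exists_prop]
    grind
  rw [← span_sdiff_singleton_zero, hrange, ← Nat.card_coe_set_eq, Nat.card_eq_fintype_card]
  exact finrank_range_le_card _

theorem linearIndependent_of_apply_eq_zero_of_lt {R ι κ : Type*} [CommRing R] [IsDomain R]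
    [Fintype ι] [LinearOrder ι] (v : ι → κ → R) (u : ι → κ)
    (hlt : ∀ i j, i < j → v i (u j) = 0) (hdiag : ∀ i, v i (u i) ≠ 0) :
    LinearIndependent R v := by
  let M : Matrix ι ι R := .of fun i j => v i (u j)
  have hM : M.IsLowerTriangular := fun i j hij => hlt i j hij
  have hdet : M.det ≠ 0 := by
    rw [det_of_isLowerTriangular M hM]
    exact prod_ne_zero_iff.mpr fun i _ => hdiag i
  exact .of_comp (LinearMap.funLeft R R u) (linearIndependent_rows_of_det_ne_zero hdet)

namespace SimpleGraph

variable {V : Type*} {G : SimpleGraph V}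

theorem Reachable.exists_dist_eq {a b : V} (hr : G.Reachable a b) {j : ℕ} (hj : j ≤ G.dist a b) :
    ∃ u, G.dist a u = j := by
  obtain ⟨p, hp⟩ := hr.exists_walk_length_eq_dist
  refine ⟨p.getVert j, ?_⟩
  rw [← length_eq_dist_of_subwalk hp (p.isSubwalk_take j), Walk.take_length]
  omega

variable [Fintype V] [DecidableEq V] [DecidableRel G.Adj]

theorem adjMatrix_add_one_pow_apply {R : Type*} [Semiring R] (j : ℕ) (u v : V) :
    ((G.adjMatrix R + 1) ^ j) u v =
      ∑ k ∈ range (j + 1), (j.choose k : R) * Fintype.card {p : G.Walk u v | p.length = k} := by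
  rw [(Commute.one_right _).add_pow, Matrix.sum_apply]
  refine sum_congr rfl fun k _ => ?_
  rw [one_pow, mul_one, ← nsmul_eq_mul', Matrix.smul_apply, nsmul_eq_mul,
    adjMatrix_pow_apply_eq_card_walk]

theorem adjMatrix_add_one_pow_apply_eq_zero_of_lt_dist {R : Type*} [Semiring R] {j : ℕ}
    {u v : V} (h : j < G.dist u v) : ((G.adjMatrix R + 1) ^ j) u v = 0 := by
  rw [adjMatrix_add_one_pow_apply]
  refine sum_eq_zero fun k hk => ?_
  have : IsEmpty {p : G.Walk u v | p.length = k} :=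
    ⟨fun ⟨p, hp⟩ => by
      have := dist_le p
      rw [mem_range] at hk
      rw [Set.mem_ofPred_eq] at hp
      omega⟩
  simp

theorem adjMatrix_add_one_pow_apply_pos_of_dist_le {R : Type*} [Semiring R] [PartialOrder R]
    [IsStrictOrderedRing R] {j : ℕ} {u v : V} (hr : G.Reachable u v) (h : G.dist u v ≤ j) :
    0 < ((G.adjMatrix R + 1) ^ j) u v := by
  obtain ⟨p, hp⟩ := hr.exists_walk_length_eq_dist
  rw [adjMatrix_add_one_pow_apply]
  refine sum_pos' (fun k _ => by positivity) ⟨G.dist u v, mem_range.mpr (by omega), ?_⟩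
  have : Nonempty {p : G.Walk u v | p.length = G.dist u v} := ⟨⟨p, hp⟩⟩
  have := Nat.choose_pos h
  positivity

theorem Connected.linearIndependent_adjMatrix_add_one_pow_mulVec_single {R : Type*} [CommRing R]
    [LinearOrder R] [IsStrictOrderedRing R] (hconn : G.Connected) (a b : V) :
    LinearIndependent R
      fun j : Fin (G.dist a b + 1) => (G.adjMatrix R + 1) ^ (j : ℕ) *ᵥ Pi.single a 1 := by
  choose u hu using fun j : Fin (G.dist a b + 1) => (hconn a b).exists_dist_eq j.is_le
  have hu' (j : Fin (G.dist a b + 1)) : G.dist (u j) a = j := dist_comm.trans (hu j)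
  refine linearIndependent_of_apply_eq_zero_of_lt _ u (fun i j hij => ?_) (fun j => ?_)
  · rw [mulVec_single_one, col_apply]
    exact adjMatrix_add_one_pow_apply_eq_zero_of_lt_dist (hu' j ▸ hij)
  · rw [mulVec_single_one, col_apply]
    exact (adjMatrix_add_one_pow_apply_pos_of_dist_le (hconn _ _) (hu' j).le).ne'

end SimpleGraph

theorem stmt_19_general {V : Type*} [Fintype V] [DecidableEq V]
    (X : SimpleGraph V) [DecidableRel X.Adj] (hconn : X.Connected)
    {m : ℕ} (θ : Fin m → ℝ)
    (E : Fin m → Matrix V V ℝ)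
    (hEmul : ∀ r s : Fin m, E r * E s = if r = s then E r else 0)
    (hEsum : ∑ r, E r = 1)
    (hspec : X.adjMatrix ℝ = ∑ r, θ r • E r) :
    ∀ a b : V, X.dist a b + 1 ≤ {r : Fin m | E r *ᵥ Pi.single a 1 ≠ 0}.ncard := by
  intro a b
  have he : CompleteOrthogonalIdempotents E := ⟨OrthogonalIdempotents.iff_mul_eq.mpr hEmul, hEsum⟩
  have hB : X.adjMatrix ℝ + 1 = ∑ r, (θ r + 1) • E r := by
    simp only [hspec, add_smul, one_smul, sum_add_distrib, hEsum]
  let krylov (j : Fin (X.dist a b + 1)) := (X.adjMatrix ℝ + 1) ^ (j : ℕ) *ᵥ Pi.single a 1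
  have hkrylov : Set.range krylov ⊆ Submodule.span ℝ (Set.range (E · *ᵥ Pi.single a 1)) := by
    rintro _ ⟨j, rfl⟩
    dsimp only [krylov]
    rw [hB, he.pow_sum_smul, sum_mulVec]
    exact Submodule.sum_mem _ fun r _ => by
      rw [smul_mulVec]
      exact Submodule.smul_mem _ _ (Submodule.subset_span ⟨r, rfl⟩)
  calc X.dist a b + 1
      = Module.finrank ℝ (Submodule.span ℝ (Set.range krylov)) := by
        rw [finrank_span_eq_card (hconn.linearIndependent_adjMatrix_add_one_pow_mulVec_single a b),
          Fintype.card_fin]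
    _ ≤ Module.finrank ℝ (Submodule.span ℝ (Set.range (E · *ᵥ Pi.single a 1))) :=
        Submodule.finrank_mono (Submodule.span_le.mpr hkrylov)
    _ ≤ _ := Submodule.finrank_span_range_le_ncard_ne_zero _

/-- Let `X` be a connected simple graph on a finite nonempty
vertex set with real adjacency matrix `A = ∑ θ_r • E_r` (spectral
decomposition). Then for all vertices `a`, `b`, we have
`dist(a,b) + 1 ≤ |{r : E_r·e_a ≠ 0}|`. -/
theorem stmt_19 {V : Type*} [Fintype V] [DecidableEq V] [Nonempty V]
    (X : SimpleGraph V) [DecidableRel X.Adj] (hconn : X.Connected)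
    {m : ℕ} (θ : Fin m → ℝ) (hθ : Function.Injective θ)
    (E : Fin m → Matrix V V ℝ)
    (hE0 : ∀ r, E r ≠ 0)
    (hEsym : ∀ r, (E r)ᵀ = E r)
    (hEmul : ∀ r s : Fin m, E r * E s = if r = s then E r else 0)
    (hEsum : ∑ r, E r = 1)
    (hspec : X.adjMatrix ℝ = ∑ r, θ r • E r) :
    ∀ a b : V, X.dist a b + 1 ≤ {r : Fin m | E r *ᵥ Pi.single a 1 ≠ 0}.ncard :=
  stmt_19_general X hconn θ E hEmul hEsum hspec
end
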